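/- arXiv:1610.04127 — 4 statements merged into one kernel-verified Lean document; each statement's English description precedes it below -/
import Mathlib

section
/- Let n ≥ 1, p ∈ [1,∞), s ∈ (0,1), and let u: ℝⁿ → ℂ be measurable. Then the magnetic Gagliardo seminorm of |u| is controlled by that of u: ∬_{ℝⁿ×ℝⁿ} ||u(x)|-|u(y)||^p / |x-y|^{n+ps} dx dy ≤ ∬_{ℝⁿ×ℝⁿ} |u(x) - e^{i(x-y)·A((x+y)/2)} u(y)|^p / |x-y|^{n+ps} dx dy. -/
open MeasureTheory Filter Set
open scoped ENNReal Topology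

noncomputable section

abbrev Euc (n : ℕ) := EuclideanSpace ℝ (Fin n)

/-- The magnetic phase factor `e^{i (x-y)·A((x+y)/2)}`. -/
def mphase (n : ℕ) (A : Euc n → Euc n) (x y : Euc n) : ℂ :=
  Complex.exp (Complex.I * ((inner ℝ (x - y) (A ((2:ℝ)⁻¹ • (x + y))) : ℝ) : ℂ))

/-- The magnetic Gagliardo integrand `|u(x) - e^{iθ}u(y)|^p / |x-y|^{n+ps}`. -/
def mkernel (n : ℕ) (p s : ℝ) (A : Euc n → Euc n) (u : Euc n → ℂ)
    (z : Euc n × Euc n) : ℝ≥0∞ :=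
  ENNReal.ofReal (‖u z.1 - mphase n A z.1 z.2 * u z.2‖ ^ p / ‖z.1 - z.2‖ ^ ((n : ℝ) + p * s))

/-- Magnetic Gagliardo energy restricted to a region `S ⊆ ℝⁿ × ℝⁿ`. -/
def magEnergyOn (n : ℕ) (p s : ℝ) (A : Euc n → Euc n) (u : Euc n → ℂ)
    (S : Set (Euc n × Euc n)) : ℝ≥0∞ :=
  ∫⁻ z in S, mkernel n p s A u z ∂((volume : Measure (Euc n)).prod volume)

/-- Magnetic Gagliardo energy (`p`-th power of the `D^{s,p}_{A,0}` norm). -/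
def magEnergy (n : ℕ) (p s : ℝ) (A : Euc n → Euc n) (u : Euc n → ℂ) : ℝ≥0∞ :=
  ∫⁻ z, mkernel n p s A u z ∂((volume : Measure (Euc n)).prod volume)

/-- `∫ |u|^p`. -/
def lpPow (n : ℕ) (p : ℝ) (u : Euc n → ℂ) : ℝ≥0∞ :=
  ∫⁻ x, ENNReal.ofReal (‖u x‖ ^ p)

/-- Membership in `D^{s,p}_{A,0}(ℝⁿ, ℂ)`: `u` is approximable by smooth compactly
supported functions in the magnetic Gagliardo energy. -/
def memD (n : ℕ) (p s : ℝ) (A : Euc n → Euc n) (u : Euc n → ℂ) : Prop :=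
  ∃ φ : ℕ → Euc n → ℂ, (∀ k, ContDiff ℝ (⊤ : ℕ∞) (φ k)) ∧ (∀ k, HasCompactSupport (φ k)) ∧
    Tendsto (fun k => magEnergy n p s A (fun x => φ k x - u x)) atTop (𝓝 0)

/-- Local boundedness of the vector field. -/
def locBounded (n : ℕ) (A : Euc n → Euc n) : Prop :=
  ∀ K : Set (Euc n), IsCompact K → ∃ C, ∀ x ∈ K, ‖A x‖ ≤ C

/-- The Maz'ya–Shaposhnikova constant `4 π^{n/2} / (p Γ(n/2))`. -/
def MSconst (n : ℕ) (p : ℝ) : ℝ≥0∞ :=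
  ENNReal.ofReal (4 * Real.pi ^ ((n : ℝ) / 2) / (p * Real.Gamma ((n : ℝ) / 2)))

/-- The near-diagonal annular region `{|x| ≤ |y| ≤ 2|x|}`. -/
def annReg (n : ℕ) : Set (Euc n × Euc n) :=
  {z | ‖z.1‖ ≤ ‖z.2‖ ∧ ‖z.2‖ ≤ 2 * ‖z.1‖}

/-- The off-diagonal region `{|y| ≥ 2|x|}`. -/
def farReg (n : ℕ) : Set (Euc n × Euc n) := {z | 2 * ‖z.1‖ ≤ ‖z.2‖}

/-- The (non-magnetic) Gagliardo energy of a real-valued function. -/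
def gagEnergy (n : ℕ) (p s : ℝ) (v : Euc n → ℝ) : ℝ≥0∞ :=
  ∫⁻ z, ENNReal.ofReal (|v z.1 - v z.2| ^ p / ‖z.1 - z.2‖ ^ ((n : ℝ) + p * s))
    ∂((volume : Measure (Euc n)).prod volume)

/-- Membership in the non-magnetic homogeneous space `D^{s,p}_0(ℝⁿ)`. -/
def memD0 (n : ℕ) (p s : ℝ) (v : Euc n → ℝ) : Prop :=
  ∃ φ : ℕ → Euc n → ℝ, (∀ k, ContDiff ℝ (⊤ : ℕ∞) (φ k)) ∧ (∀ k, HasCompactSupport (φ k)) ∧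
    Tendsto (fun k => gagEnergy n p s (fun x => φ k x - v x)) atTop (𝓝 0)

/-- the Gagliardo seminorm of `|u|` is controlled by the magnetic one. -/
theorem gagliardo_abs_le_magnetic (n : ℕ) (p s : ℝ) (hn : 1 ≤ n) (hp : 1 ≤ p)
    (hs : s ∈ Ioo (0:ℝ) 1) (A : Euc n → Euc n) (hA : Measurable A)
    (u : Euc n → ℂ) (hu : Measurable u) :
    gagEnergy n p s (fun x => ‖u x‖) ≤ magEnergy n p s A u := by
  refine lintegral_mono fun z => ENNReal.ofReal_le_ofReal ?_
  have h1 : ‖mphase n A z.1 z.2‖ = 1 := by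
    rw [mphase, Complex.norm_exp]
    simp
  have key : |‖u z.1‖ - ‖u z.2‖| ≤ ‖u z.1 - mphase n A z.1 z.2 * u z.2‖ :=
    calc |‖u z.1‖ - ‖u z.2‖| = |‖u z.1‖ - ‖mphase n A z.1 z.2 * u z.2‖| := by
          rw [norm_mul, h1, one_mul]
      _ ≤ ‖u z.1 - mphase n A z.1 z.2 * u z.2‖ := abs_norm_sub_norm_le _ _
  gcongr
end
end

section
/- Tail estimate on the off-diagonal region: Let n ≥ 1, p ∈ [1,∞), s ∈ (0,1), and u: ℝⁿ → ℂ measurable. Then s ∬_{\{|y| ≥ 2|x|\}} |u(y)|^p / |x-y|^{n+sp} dx dy ≤ 2^{sp} (s/n) Hⁿ⁻¹(Sⁿ⁻¹) ∫_{ℝⁿ} |u(y)|^p / |y|^{sp} dy, where Hⁿ⁻¹(Sⁿ⁻¹) = 2π^{n/2}/Γ(n/2) is the surface measure of the unit sphere. -/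
open MeasureTheory Filter Set
open scoped ENNReal Topology

noncomputable section

/-- tail estimate on the off-diagonal region `{|y| ≥ 2|x|}`. -/
theorem offdiagonal_tail_estimate (n : ℕ) (p s : ℝ) (hn : 1 ≤ n) (hp : 1 ≤ p)
    (hs : s ∈ Ioo (0:ℝ) 1) (u : Euc n → ℂ) (hu : Measurable u) :
    ENNReal.ofReal s * (∫⁻ z in farReg n,
        ENNReal.ofReal (‖u z.2‖ ^ p / ‖z.1 - z.2‖ ^ ((n : ℝ) + s * p))
        ∂((volume : Measure (Euc n)).prod volume)) ≤
      ENNReal.ofReal ((2:ℝ) ^ (s * p) * (s / (n : ℝ)) *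
          (2 * Real.pi ^ ((n : ℝ) / 2) / Real.Gamma ((n : ℝ) / 2))) *
        ∫⁻ y, ENNReal.ofReal (‖u y‖ ^ p / ‖y‖ ^ (s * p)) := by
  have hs0 : (0:ℝ) < s := hs.1
  have hp0 : (0:ℝ) < p := lt_of_lt_of_le one_pos hp
  have hn0 : (0:ℝ) < n := by exact_mod_cast hn
  set q : ℝ := (n : ℝ) + s * p with hq
  have hq0 : (0:ℝ) < q := by positivity
  set B : ℝ := 2 ^ q with hB
  have hB0 : (0:ℝ) < B := Real.rpow_pos_of_pos two_pos q
  haveI : Nonempty (Fin n) := ⟨⟨0, hn⟩⟩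
  have hmeas_far : MeasurableSet (farReg n) := by
    have : IsClosed (farReg n) :=
      isClosed_le (by fun_prop) (by fun_prop)
    exact this.measurableSet
  set F : Euc n → ℝ≥0∞ := fun y => ENNReal.ofReal (B * (‖u y‖ ^ p / ‖y‖ ^ q)) with hF
  have hFmeas : Measurable F := by
    apply Measurable.ennreal_ofReal
    fun_prop
  -- Step A : pointwise bound on farReg
  have stepA : (∫⁻ z in farReg n,
      ENNReal.ofReal (‖u z.2‖ ^ p / ‖z.1 - z.2‖ ^ q)
      ∂((volume : Measure (Euc n)).prod volume)) ≤
      ∫⁻ z in farReg n, F z.2 ∂((volume : Measure (Euc n)).prod volume) := by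
    refine setLIntegral_mono' hmeas_far ?_
    rintro ⟨x, y⟩ hz
    simp only [farReg, mem_setOf_eq] at hz
    rcases eq_or_lt_of_le (norm_nonneg y) with h0 | h0
    · have hy0 : ‖y‖ = 0 := h0.symm
      have hx0 : ‖x‖ = 0 := by nlinarith [norm_nonneg x]
      have : ‖x - y‖ = 0 := by
        have : x = y := by
          have hx := norm_eq_zero.mp hx0; have hy := norm_eq_zero.mp hy0
          rw [hx, hy]
        simp [this]
      simp [this, Real.zero_rpow hq0.ne']
    · -- y ≠ 0
      have hdist : ‖y‖ / 2 ≤ ‖x - y‖ := by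
        have h1 : ‖y‖ - ‖x‖ ≤ ‖x - y‖ := by
          have := norm_sub_norm_le y x
          rw [norm_sub_rev y x] at this
          linarith [abs_le.mp (abs_norm_sub_norm_le y x) |>.2]
        linarith
      have hpos : (0:ℝ) < ‖y‖ / 2 := by linarith
      have hrpow : (‖y‖ / 2) ^ q ≤ ‖x - y‖ ^ q :=
        Real.rpow_le_rpow hpos.le hdist hq0.le
      have hdiv : ‖u y‖ ^ p / ‖x - y‖ ^ q ≤ ‖u y‖ ^ p / (‖y‖ / 2) ^ q := by
        apply div_le_div_of_nonneg_left _ (Real.rpow_pos_of_pos hpos q) hrpow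
        positivity
      have heq : ‖u y‖ ^ p / (‖y‖ / 2) ^ q = B * (‖u y‖ ^ p / ‖y‖ ^ q) := by
        rw [Real.div_rpow (norm_nonneg y) (by norm_num : (0:ℝ) ≤ 2)]
        rw [div_div_eq_mul_div, hB]
        ring
      exact ENNReal.ofReal_le_ofReal (by rw [← heq]; exact hdiv)
  -- Step B : Fubini and volume of ball
  have hcard : Fintype.card (Fin n) = n := Fintype.card_fin n
  have stepB : (∫⁻ z in farReg n, F z.2 ∂((volume : Measure (Euc n)).prod volume)) =
      ∫⁻ y, F y * volume (Metric.closedBall (0 : Euc n) (‖y‖ / 2)) := by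
    rw [← lintegral_indicator hmeas_far]
    rw [lintegral_prod_symm' _ (Measurable.indicator
      (show Measurable fun z : Euc n × Euc n => F z.2 from hFmeas.comp measurable_snd) hmeas_far)]
    congr 1
    ext y
    have hind : ∀ x : Euc n, (farReg n).indicator (fun z : Euc n × Euc n => F z.2) (x, y) =
        (Metric.closedBall (0 : Euc n) (‖y‖ / 2)).indicator (fun _ => F y) x := by
      intro x
      by_cases hx : 2 * ‖x‖ ≤ ‖y‖
      · rw [Set.indicator_of_mem (by exact hx : (x,y) ∈ farReg n),
          Set.indicator_of_mem (by simp [Metric.mem_closedBall, dist_zero_right]; linarith)]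
      · rw [Set.indicator_of_notMem (by exact hx : (x,y) ∉ farReg n),
          Set.indicator_of_notMem (by simp [Metric.mem_closedBall, dist_zero_right]; linarith [not_le.mp hx])]
    simp_rw [hind]
    rw [lintegral_indicator_const measurableSet_closedBall]
  -- pointwise constant computation
  set C : ℝ := (2:ℝ) ^ (s * p) * (s / (n : ℝ)) *
      (2 * Real.pi ^ ((n : ℝ) / 2) / Real.Gamma ((n : ℝ) / 2)) with hC
  have pointwise : ∀ y : Euc n,
      ENNReal.ofReal s * (F y * volume (Metric.closedBall (0 : Euc n) (‖y‖ / 2))) ≤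
      ENNReal.ofReal C * ENNReal.ofReal (‖u y‖ ^ p / ‖y‖ ^ (s * p)) := by
    intro y
    rcases eq_or_lt_of_le (norm_nonneg y) with h0 | h0
    · have hy0 : ‖y‖ = 0 := h0.symm
      have : F y = 0 := by
        simp [hF, hy0, Real.zero_rpow hq0.ne']
      simp [this]
    · rw [EuclideanSpace.volume_closedBall, hcard]
      set r := ‖y‖ with hr
      have hΓpos : 0 < Real.Gamma ((n:ℝ)/2) := Real.Gamma_pos_of_pos (by positivity)
      -- combine ofReals
      rw [← ENNReal.ofReal_pow (by positivity : (0:ℝ) ≤ r / 2), ← ENNReal.ofReal_mul (by positivity),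
        ← ENNReal.ofReal_mul (by positivity), ← ENNReal.ofReal_mul hs0.le,
        ← ENNReal.ofReal_mul (by positivity)]
      apply ENNReal.ofReal_le_ofReal
      -- now a real inequality (in fact equality)
      have hsqrtpi : Real.sqrt Real.pi ^ n = Real.pi ^ ((n:ℝ)/2) := by
        rw [Real.sqrt_eq_rpow, ← Real.rpow_natCast (Real.pi ^ ((1:ℝ)/2)) n,
          ← Real.rpow_mul Real.pi_pos.le]
        ring_nf
      have hGamma : Real.Gamma ((n:ℝ)/2 + 1) = ((n:ℝ)/2) * Real.Gamma ((n:ℝ)/2) := by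
        rw [Real.Gamma_add_one (by positivity)]
      have hrq : r ^ q = r ^ n * r ^ (s * p) := by
        rw [hq, Real.rpow_add h0, Real.rpow_natCast]
      have hBq : B = 2 ^ n * (2:ℝ) ^ (s * p) := by
        rw [hB, hq, Real.rpow_add two_pos, Real.rpow_natCast]
      have hrn : ((r / 2) ^ n : ℝ) = r ^ n / 2 ^ n := div_pow r 2 n
      have h2n : (0:ℝ) < 2 ^ n := by positivity
      have hrn0 : (0:ℝ) < r ^ n := by positivity
      have hΓ0 : Real.Gamma ((n:ℝ)/2) ≠ 0 := hΓpos.ne'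
      have hrsp : (0:ℝ) < r ^ (s * p) := Real.rpow_pos_of_pos h0 _
      apply le_of_eq
      rw [hsqrtpi, hGamma, hBq, hrq, hrn, hC]
      field_simp
  -- assemble
  calc ENNReal.ofReal s * (∫⁻ z in farReg n,
        ENNReal.ofReal (‖u z.2‖ ^ p / ‖z.1 - z.2‖ ^ q)
        ∂((volume : Measure (Euc n)).prod volume))
      ≤ ENNReal.ofReal s * ∫⁻ y, F y * volume (Metric.closedBall (0 : Euc n) (‖y‖ / 2)) := by
        rw [← stepB]; exact mul_le_mul_right stepA _
    _ = ∫⁻ y, ENNReal.ofReal s * (F y * volume (Metric.closedBall (0 : Euc n) (‖y‖ / 2))) := by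
        rw [lintegral_const_mul' _ _ ENNReal.ofReal_ne_top]
    _ ≤ ∫⁻ y, ENNReal.ofReal C * ENNReal.ofReal (‖u y‖ ^ p / ‖y‖ ^ (s * p)) :=
        lintegral_mono pointwise
    _ = ENNReal.ofReal C * ∫⁻ y, ENNReal.ofReal (‖u y‖ ^ p / ‖y‖ ^ (s * p)) := by
        rw [lintegral_const_mul' _ _ ENNReal.ofReal_ne_top]
end
end

section
/- Near-diagonal annular region vanishes: Let n ≥ 1, p ∈ [1,∞), τ ∈ (0,1), and let u: ℝⁿ → ℂ be a measurable function with u ∈ L^p(ℝⁿ) and ∬_{ℝⁿ×ℝⁿ} |u(x) - e^{i(x-y)·A((x+y)/2)} u(y)|^p / |x-y|^{n+τp} dx dy < ∞. Then lim_{s→0⁺} s ∬_{\{|x| ≤ |y| ≤ 2|x|\}} |u(x) - e^{i(x-y)·A((x+y)/2)} u(y)|^p / |x-y|^{n+sp} dx dy = 0. -/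
open MeasureTheory Filter Set
open scoped ENNReal Topology

noncomputable section

section AuxAnnular

lemma meas_rpow {α : Type*} [MeasurableSpace α] {f : α → ℝ} (hf : Measurable f) (c : ℝ) :
    Measurable fun x => f x ^ c := by fun_prop

lemma mphase_meas (n : ℕ) (A : Euc n → Euc n) (hA : Measurable A) :
    Measurable (fun z : Euc n × Euc n => mphase n A z.1 z.2) := by
  unfold mphase
  apply Measurable.cexp
  apply Measurable.const_mul
  apply Complex.measurable_ofReal.comp
  exact (measurable_fst.sub measurable_snd).inner
    (hA.comp ((measurable_fst.add measurable_snd).const_smul (2:ℝ)⁻¹))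

lemma mkernel_meas (n : ℕ) (p s : ℝ) (A : Euc n → Euc n) (u : Euc n → ℂ)
    (hA : Measurable A) (hu : Measurable u) : Measurable (mkernel n p s A u) := by
  unfold mkernel
  apply ENNReal.measurable_ofReal.comp
  apply Measurable.div
  · exact meas_rpow ((hu.comp measurable_fst).sub
      ((mphase_meas n A hA).mul (hu.comp measurable_snd))).norm p
  · exact meas_rpow ((measurable_fst.sub measurable_snd).norm) _

lemma mphase_norm (n : ℕ) (A : Euc n → Euc n) (x y : Euc n) : ‖mphase n A x y‖ = 1 := by
  simp [mphase, Complex.norm_exp]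

open Metric

lemma lintegral_sub_left (n : ℕ) (x : Euc n) (f : Euc n → ℝ≥0∞) :
    ∫⁻ y, f (x - y) = ∫⁻ y, f y := by
  calc ∫⁻ y, f (x - y) = ∫⁻ y, (fun w => f (x + w)) (-y) := by simp [sub_eq_add_neg]
    _ = ∫⁻ y, f (x + y) :=
        (Measure.measurePreserving_neg (volume : Measure (Euc n))).lintegral_comp_emb
          measurableEmbedding_neg (fun w => f (x + w))
    _ = ∫⁻ y, f y := lintegral_add_left_eq_self f x

lemma prod_mul_fst (n : ℕ) (h1 h2 : Euc n → ℝ≥0∞) (hh1 : Measurable h1) (hh2 : Measurable h2) :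
    ∫⁻ z : Euc n × Euc n, h1 z.1 * h2 (z.1 - z.2) ∂((volume : Measure (Euc n)).prod volume)
      = (∫⁻ x, h1 x) * ∫⁻ w, h2 w := by
  rw [lintegral_prod _ (by fun_prop :
    Measurable fun z : Euc n × Euc n => h1 z.1 * h2 (z.1 - z.2)).aemeasurable]
  calc ∫⁻ x, ∫⁻ y, h1 x * h2 (x - y) = ∫⁻ x, h1 x * ∫⁻ y, h2 (x - y) :=
        lintegral_congr fun x =>
          lintegral_const_mul _ (hh2.comp (measurable_const.sub measurable_id))
    _ = ∫⁻ x, h1 x * ∫⁻ w, h2 w :=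
        lintegral_congr fun x => by rw [lintegral_sub_left n x h2]
    _ = _ := lintegral_mul_const _ hh1

lemma prod_mul_snd (n : ℕ) (h1 h2 : Euc n → ℝ≥0∞) (hh1 : Measurable h1) (hh2 : Measurable h2) :
    ∫⁻ z : Euc n × Euc n, h1 z.2 * h2 (z.1 - z.2) ∂((volume : Measure (Euc n)).prod volume)
      = (∫⁻ x, h1 x) * ∫⁻ w, h2 w := by
  rw [lintegral_prod_symm _ (by fun_prop :
    Measurable fun z : Euc n × Euc n => h1 z.2 * h2 (z.1 - z.2)).aemeasurable]
  calc ∫⁻ y, ∫⁻ x, h1 y * h2 (x - y) = ∫⁻ y, h1 y * ∫⁻ x, h2 (x - y) :=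
        lintegral_congr fun y =>
          lintegral_const_mul _ (hh2.comp (measurable_id.sub measurable_const))
    _ = ∫⁻ y, h1 y * ∫⁻ w, h2 w :=
        lintegral_congr fun y => by rw [lintegral_sub_right_eq_self h2 y]
    _ = _ := lintegral_mul_const _ hh1

lemma radial_bound (n : ℕ) (q : ℝ) (hq : 0 < q) :
    ∫⁻ z in {w : Euc n | 1 < ‖w‖}, ENNReal.ofReal (‖z‖ ^ (-((n:ℝ) + q))) ∂volume
      ≤ ENNReal.ofReal ((2:ℝ) ^ (n:ℝ)) * volume (ball (0:Euc n) 1)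
          * (ENNReal.ofReal (1 - 2 ^ (-q)))⁻¹ := by
  set c : ℝ := (n:ℝ) + q with hc
  have hcpos : 0 < c := by positivity
  set Ak : ℕ → Set (Euc n) := fun k => {w | (2:ℝ)^k < ‖w‖ ∧ ‖w‖ ≤ 2^(k+1)} with hAk
  have hsub : {w : Euc n | 1 < ‖w‖} ⊆ ⋃ k, Ak k := by
    intro w hw
    have hw1 : (1:ℝ) < ‖w‖ := hw
    obtain ⟨m, hm⟩ := pow_unbounded_of_one_lt (R := ℝ) ‖w‖ one_lt_two
    have hex : ∃ m, ‖w‖ ≤ (2:ℝ)^m := ⟨m, hm.le⟩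
    classical
    set m0 := Nat.find hex with hm0
    have hle : ‖w‖ ≤ (2:ℝ)^m0 := Nat.find_spec hex
    have hm0pos : m0 ≠ 0 := by
      intro h
      rw [h] at hle; simp at hle; linarith
    obtain ⟨k, hk⟩ := Nat.exists_eq_succ_of_ne_zero hm0pos
    refine mem_iUnion.2 ⟨k, ?_, ?_⟩
    · by_contra h
      push_neg at h
      exact Nat.find_min hex (by omega) h
    · rw [← Nat.succ_eq_add_one, ← hk]; exact hle
  have hmeas : ∀ k, volume (Ak k) ≤ ENNReal.ofReal (((2:ℝ)^(k+1)) ^ n) * volume (ball (0:Euc n) 1) := by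
    intro k
    have : Ak k ⊆ closedBall (0:Euc n) (2^(k+1)) := fun w hw => by
      simpa [mem_closedBall, dist_zero_right] using hw.2
    refine (measure_mono this).trans ?_
    rw [Measure.addHaar_closedBall _ _ (by positivity)]
    simp [finrank_euclideanSpace_fin]
  have hbound : ∀ k, ∫⁻ z in Ak k, ENNReal.ofReal (‖z‖ ^ (-c)) ∂volume
      ≤ ENNReal.ofReal ((2:ℝ)^(n:ℝ)) * volume (ball (0:Euc n) 1)
         * (ENNReal.ofReal ((2:ℝ)^(-q)))^k := by
    intro k
    have h1 : ∫⁻ z in Ak k, ENNReal.ofReal (‖z‖ ^ (-c)) ∂volume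
        ≤ ∫⁻ _ in Ak k, ENNReal.ofReal (((2:ℝ)^k) ^ (-c)) ∂volume := by
      refine setLIntegral_mono measurable_const fun z hz => ?_
      exact ENNReal.ofReal_le_ofReal
        (Real.rpow_le_rpow_of_nonpos (by positivity) hz.1.le (by linarith))
    refine h1.trans ?_
    rw [setLIntegral_const]
    calc ENNReal.ofReal (((2:ℝ)^k) ^ (-c)) * volume (Ak k)
        ≤ ENNReal.ofReal (((2:ℝ)^k) ^ (-c)) * (ENNReal.ofReal (((2:ℝ)^(k+1)) ^ n) * volume (ball (0:Euc n) 1)) := by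
          gcongr; exact hmeas k
      _ = ENNReal.ofReal ((((2:ℝ)^k) ^ (-c)) * (((2:ℝ)^(k+1)) ^ n)) * volume (ball (0:Euc n) 1) := by
          rw [ENNReal.ofReal_mul (by positivity)]; ring
      _ = ENNReal.ofReal ((2:ℝ)^(n:ℝ)) * volume (ball (0:Euc n) 1)
            * (ENNReal.ofReal ((2:ℝ)^(-q)))^k := by
          have key : ((2:ℝ)^k) ^ (-c) * ((2:ℝ)^(k+1)) ^ n
              = (2:ℝ)^(n:ℝ) * ((2:ℝ)^(-q))^k := by
            rw [show ((2:ℝ)^(k+1))^n = (2:ℝ)^((k+1)*n) from (pow_mul 2 (k+1) n).symm,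
              ← Real.rpow_natCast (2:ℝ) ((k+1)*n), ← Real.rpow_natCast (2:ℝ) k,
              ← Real.rpow_mul (by norm_num), ← Real.rpow_natCast ((2:ℝ)^(-q)) k,
              ← Real.rpow_mul (by norm_num),
              ← Real.rpow_add (by norm_num), ← Real.rpow_add (by norm_num)]
            congr 1
            push_cast [hc]
            ring
          rw [key, ENNReal.ofReal_mul (by positivity), ← ENNReal.ofReal_pow (by positivity)]
          ring
  calc ∫⁻ z in {w : Euc n | 1 < ‖w‖}, ENNReal.ofReal (‖z‖ ^ (-c)) ∂volume
      ≤ ∫⁻ z in ⋃ k, Ak k, ENNReal.ofReal (‖z‖ ^ (-c)) ∂volume := lintegral_mono_set hsub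
    _ ≤ ∑' k, ∫⁻ z in Ak k, ENNReal.ofReal (‖z‖ ^ (-c)) ∂volume := lintegral_iUnion_le _ _
    _ ≤ ∑' k, ENNReal.ofReal ((2:ℝ)^(n:ℝ)) * volume (ball (0:Euc n) 1)
         * (ENNReal.ofReal ((2:ℝ)^(-q)))^k := ENNReal.tsum_le_tsum hbound
    _ = ENNReal.ofReal ((2:ℝ)^(n:ℝ)) * volume (ball (0:Euc n) 1)
         * (1 - ENNReal.ofReal ((2:ℝ)^(-q)))⁻¹ := by
          rw [ENNReal.tsum_mul_left, ENNReal.tsum_geometric]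
    _ = _ := by
          rw [ENNReal.ofReal_sub _ (by positivity), ENNReal.ofReal_one]

lemma s_div_bound (p τ s : ℝ) (hp : 1 ≤ p) (hs : 0 < s) (hsτ : s ≤ τ) :
    s / (1 - 2 ^ (-(p * s))) ≤ (1 + τ * p * Real.log 2) / (p * Real.log 2) := by
  have hl2 : (0:ℝ) < Real.log 2 := Real.log_pos one_lt_two
  set t : ℝ := s * p * Real.log 2 with ht
  have htpos : 0 < t := by positivity
  have hexp : (2:ℝ) ^ (-(p * s)) = Real.exp (-t) := by
    rw [Real.rpow_def_of_pos two_pos]; congr 1; ring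
  have h1 : Real.exp (-t) ≤ (1 + t)⁻¹ := by
    rw [Real.exp_neg]
    exact inv_anti₀ (by linarith) (by linarith [Real.add_one_le_exp t])
  have h2 : t / (1 + t) ≤ 1 - 2 ^ (-(p * s)) := by
    rw [hexp]
    have : t / (1 + t) = 1 - (1 + t)⁻¹ := by field_simp; ring
    linarith [this]
  have h3 : 0 < t / (1 + t) := by positivity
  calc s / (1 - 2 ^ (-(p * s))) ≤ s / (t / (1 + t)) := by gcongr
    _ = (1 + t) / (p * Real.log 2) := by
        rw [div_div_eq_mul_div, div_eq_div_iff (by positivity) (by positivity)]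
        ring
    _ ≤ (1 + τ * p * Real.log 2) / (p * Real.log 2) := by
        gcongr
        nlinarith

lemma tail_small (n : ℕ) (f : Euc n → ℝ≥0∞) (hf : Measurable f) (hfin : ∫⁻ x, f x ≠ ∞)
    (δ : ℝ≥0∞) (hδ : 0 < δ) :
    ∃ N : ℝ, 1 ≤ N ∧ ∫⁻ x in {x : Euc n | N ≤ 3 * ‖x‖}, f x ∂volume < δ := by
  by_cases hδI : ∫⁻ x, f x < δ
  · exact ⟨1, le_refl 1, lt_of_le_of_lt (setLIntegral_le_lintegral _ _) hδI⟩
  push_neg at hδI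
  set g : ℕ → Euc n → ℝ≥0∞ := fun k => (ball (0:Euc n) k).indicator f with hg
  have hmono : Monotone g := fun a b hab x => by
    refine indicator_le_indicator_of_subset (ball_subset_ball ?_) (fun _ => zero_le) x
    exact_mod_cast hab
  have hsup : ∀ x, ⨆ k, g k x = f x := by
    intro x
    obtain ⟨k, hk⟩ := exists_nat_gt ‖x‖
    refine le_antisymm (iSup_le fun k => indicator_le_self _ _ x) ?_
    refine le_iSup_of_le k ?_
    show f x ≤ (ball (0:Euc n) (k:ℝ)).indicator f x
    rw [indicator_of_mem (by simp [mem_ball, dist_zero_right, hk]) f]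
  have hls : ∫⁻ x, f x = ⨆ k, ∫⁻ x, g k x := by
    rw [← lintegral_iSup (fun k => hf.indicator measurableSet_ball) hmono]
    exact lintegral_congr fun x => (hsup x).symm
  have : ∃ k : ℕ, ∫⁻ x in (ball (0:Euc n) k)ᶜ, f x ∂volume < δ := by
    by_contra hcon
    push_neg at hcon
    have hub : ∀ k, ∫⁻ x, g k x ∂volume ≤ ∫⁻ x, f x ∂volume - δ := by
      intro k
      have hsplit := lintegral_add_compl (μ := (volume : Measure (Euc n))) f
        (measurableSet_ball (x := (0:Euc n)) (ε := (k:ℝ)))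
      have hgk : ∫⁻ x, g k x ∂volume = ∫⁻ x in ball (0:Euc n) k, f x ∂volume := by
        rw [hg]; exact lintegral_indicator measurableSet_ball f
      rw [hgk]
      have h2 := hcon k
      have hkey : ∫⁻ x in ball (0:Euc n) k, f x ∂volume + δ ≤ ∫⁻ x, f x ∂volume := by
        calc ∫⁻ x in ball (0:Euc n) k, f x ∂volume + δ
            ≤ ∫⁻ x in ball (0:Euc n) k, f x ∂volume
              + ∫⁻ x in (ball (0:Euc n) k)ᶜ, f x ∂volume := by gcongr
          _ = ∫⁻ x, f x ∂volume := hsplit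
      exact ENNReal.le_sub_of_add_le_right (lt_of_le_of_lt hδI hfin.lt_top).ne hkey
    have habs : (⨆ k, ∫⁻ x, g k x ∂volume) ≤ ∫⁻ x, f x ∂volume - δ := iSup_le hub
    rw [← hls] at habs
    exact absurd habs (not_le.2 (ENNReal.sub_lt_self hfin (lt_of_lt_of_le hδ hδI).ne' hδ.ne'))
  obtain ⟨k, hk⟩ := this
  refine ⟨3 * ((k:ℝ) + 1), by have h0 : (0:ℝ) ≤ (k:ℝ) := Nat.cast_nonneg k; linarith, ?_⟩
  refine lt_of_le_of_lt (lintegral_mono_set ?_) hk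
  intro x hx
  simp only [mem_setOf_eq] at hx
  simp only [mem_compl_iff, mem_ball, dist_zero_right, not_lt]
  linarith

lemma rpow_add_bound {a b : ℝ} (ha : 0 ≤ a) (hb : 0 ≤ b) {p : ℝ} (hp0 : 0 ≤ p) :
    (a + b) ^ p ≤ 2 ^ p * (a ^ p + b ^ p) := by
  have h2 : a + b ≤ 2 * max a b := by
    rcases le_total a b with h | h
    · rw [max_eq_right h]; linarith
    · rw [max_eq_left h]; linarith
  have h3 : max a b ^ p ≤ a ^ p + b ^ p := by
    rcases le_total a b with h | h
    · rw [max_eq_right h]; nlinarith [Real.rpow_nonneg ha p]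
    · rw [max_eq_left h]; nlinarith [Real.rpow_nonneg hb p]
  calc (a + b) ^ p ≤ (2 * max a b) ^ p := Real.rpow_le_rpow (by linarith) h2 hp0
    _ = 2 ^ p * max a b ^ p := Real.mul_rpow (by norm_num) (le_max_of_le_left ha)
    _ ≤ 2 ^ p * (a ^ p + b ^ p) := by gcongr <;> positivity

lemma near_ptwise (n : ℕ) (p τ s N : ℝ) (hp : 1 ≤ p) (hs : 0 < s) (hsτ : s ≤ τ)
    (hN : 1 ≤ N) (A : Euc n → Euc n) (u : Euc n → ℂ) (z : Euc n × Euc n)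
    (hz : ‖z.1 - z.2‖ ≤ N) :
    mkernel n p s A u z ≤ ENNReal.ofReal (N ^ (p * τ)) * mkernel n p τ A u z := by
  set F := ‖u z.1 - mphase n A z.1 z.2 * u z.2‖ ^ p with hF
  have hF0 : 0 ≤ F := Real.rpow_nonneg (norm_nonneg _) p
  set r := ‖z.1 - z.2‖ with hr
  have hr0 : 0 ≤ r := norm_nonneg _
  rw [mkernel, mkernel, ← ENNReal.ofReal_mul (by positivity)]
  apply ENNReal.ofReal_le_ofReal
  rcases eq_or_lt_of_le hr0 with h0 | hrpos
  · have hc1 : ((n:ℝ) + p * s) ≠ 0 := by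
      have : (0:ℝ) ≤ (n:ℝ) := Nat.cast_nonneg n; nlinarith
    have hc2 : ((n:ℝ) + p * τ) ≠ 0 := by
      have : (0:ℝ) ≤ (n:ℝ) := Nat.cast_nonneg n; nlinarith
    rw [← hr, ← h0, Real.zero_rpow hc1, Real.zero_rpow hc2]
    simp
  · have key : r ^ (-((n:ℝ) + p * s)) ≤ N ^ (p * τ) * r ^ (-((n:ℝ) + p * τ)) := by
      have hd : -((n:ℝ) + p * s) = (p * τ - p * s) + -((n:ℝ) + p * τ) := by ring
      rw [hd, Real.rpow_add hrpos]
      gcongr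
      calc r ^ (p * τ - p * s) ≤ N ^ (p * τ - p * s) :=
            Real.rpow_le_rpow hr0 hz (by nlinarith)
        _ ≤ N ^ (p * τ) := Real.rpow_le_rpow_of_exponent_le hN (by nlinarith)
    calc F / r ^ ((n:ℝ) + p * s) = F * r ^ (-((n:ℝ) + p * s)) := by
          rw [Real.rpow_neg hr0, div_eq_mul_inv]
      _ ≤ F * (N ^ (p * τ) * r ^ (-((n:ℝ) + p * τ))) := by gcongr
      _ = N ^ (p * τ) * (F / r ^ ((n:ℝ) + p * τ)) := by
          rw [Real.rpow_neg hr0, div_eq_mul_inv]; ring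

lemma far_ptwise (n : ℕ) (p s : ℝ) (hp : 1 ≤ p) (A : Euc n → Euc n) (u : Euc n → ℂ)
    (z : Euc n × Euc n) (hrpos : 0 < ‖z.1 - z.2‖) :
    mkernel n p s A u z ≤ ENNReal.ofReal ((2:ℝ) ^ p) *
      (ENNReal.ofReal (‖u z.1‖ ^ p / ‖z.1 - z.2‖ ^ ((n:ℝ) + p * s))
        + ENNReal.ofReal (‖u z.2‖ ^ p / ‖z.1 - z.2‖ ^ ((n:ℝ) + p * s))) := by
  have hp0 : (0:ℝ) ≤ p := by linarith
  have ha : (0:ℝ) ≤ ‖u z.1‖ := norm_nonneg _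
  have hb : (0:ℝ) ≤ ‖u z.2‖ := norm_nonneg _
  have hnum : ‖u z.1 - mphase n A z.1 z.2 * u z.2‖ ^ p
      ≤ 2 ^ p * (‖u z.1‖ ^ p + ‖u z.2‖ ^ p) := by
    have h1 : ‖u z.1 - mphase n A z.1 z.2 * u z.2‖ ≤ ‖u z.1‖ + ‖u z.2‖ := by
      calc ‖u z.1 - mphase n A z.1 z.2 * u z.2‖
          ≤ ‖u z.1‖ + ‖mphase n A z.1 z.2 * u z.2‖ := norm_sub_le _ _
        _ = ‖u z.1‖ + ‖u z.2‖ := by rw [norm_mul, mphase_norm, one_mul]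
    calc ‖u z.1 - mphase n A z.1 z.2 * u z.2‖ ^ p
        ≤ (‖u z.1‖ + ‖u z.2‖) ^ p := Real.rpow_le_rpow (norm_nonneg _) h1 hp0
      _ ≤ 2 ^ p * (‖u z.1‖ ^ p + ‖u z.2‖ ^ p) := rpow_add_bound ha hb hp0
  calc mkernel n p s A u z
      ≤ ENNReal.ofReal ((2 ^ p * ‖u z.1‖ ^ p + 2 ^ p * ‖u z.2‖ ^ p)
          / ‖z.1 - z.2‖ ^ ((n:ℝ) + p * s)) := by
        simp only [mkernel]
        apply ENNReal.ofReal_le_ofReal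
        gcongr
        linarith [hnum]
    _ = ENNReal.ofReal ((2:ℝ) ^ p) *
        (ENNReal.ofReal (‖u z.1‖ ^ p / ‖z.1 - z.2‖ ^ ((n:ℝ) + p * s))
          + ENNReal.ofReal (‖u z.2‖ ^ p / ‖z.1 - z.2‖ ^ ((n:ℝ) + p * s))) := by
        rw [add_div, ENNReal.ofReal_add (by positivity) (by positivity),
          mul_div_assoc, mul_div_assoc, ENNReal.ofReal_mul (by positivity),
          ENNReal.ofReal_mul (by positivity), mul_add]

end AuxAnnular

/-- the near-diagonal annular region contributes nothing in the limit. -/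
theorem annular_region_vanishes (n : ℕ) (p τ : ℝ) (hn : 1 ≤ n) (hp : 1 ≤ p)
    (hτ : τ ∈ Ioo (0:ℝ) 1) (A : Euc n → Euc n) (hA : Measurable A)
    (u : Euc n → ℂ) (hu : Measurable u) (hLp : lpPow n p u < ⊤)
    (hE : magEnergy n p τ A u < ⊤) :
    Tendsto (fun s : ℝ => ENNReal.ofReal s * magEnergyOn n p s A u (annReg n))
      (𝓝[>] (0:ℝ)) (𝓝 0) := by
  obtain ⟨hτ0, hτ1⟩ := hτ
  rw [ENNReal.tendsto_nhds_zero]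
  intro ε hε
  set ε' := min ε 1 with hε'
  have hε'pos : 0 < ε' := lt_min hε one_pos
  have hε'2pos : 0 < ε' / 2 := ENNReal.div_pos hε'pos.ne' ENNReal.ofNat_ne_top
  set volB := volume (Metric.ball (0:Euc n) 1) with hvolB
  have hvolB_top : volB ≠ ∞ := measure_ball_lt_top.ne
  have hvolB_pos : 0 < volB := Metric.measure_ball_pos volume 0 one_pos
  have hl2 : (0:ℝ) < Real.log 2 := Real.log_pos one_lt_two
  set K : ℝ := (1 + τ * p * Real.log 2) / (p * Real.log 2) with hK
  have hKpos : 0 < K := div_pos (by nlinarith [mul_pos (mul_pos hτ0 (lt_of_lt_of_le zero_lt_one hp)) hl2]) (by positivity)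
  set R : ℝ≥0∞ := ENNReal.ofReal ((2:ℝ)^(n:ℝ)) * volB * ENNReal.ofReal K with hR
  have hRtop : R ≠ ∞ :=
    ENNReal.mul_ne_top (ENNReal.mul_ne_top ENNReal.ofReal_ne_top hvolB_top)
      ENNReal.ofReal_ne_top
  have hRpos : 0 < R := by
    refine ENNReal.mul_pos (ENNReal.mul_pos ?_ hvolB_pos.ne').ne' ?_
    · exact (ENNReal.ofReal_pos.2 (by positivity)).ne'
    · exact (ENNReal.ofReal_pos.2 hKpos).ne'
  set Cfar : ℝ≥0∞ := ENNReal.ofReal ((2:ℝ)^p) * 2 * R with hCfar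
  have hCfar_top : Cfar ≠ ∞ :=
    ENNReal.mul_ne_top (ENNReal.mul_ne_top ENNReal.ofReal_ne_top ENNReal.ofNat_ne_top) hRtop
  have hCfar_pos : Cfar ≠ 0 := by
    refine (ENNReal.mul_pos (ENNReal.mul_pos ?_ ?_).ne' hRpos.ne').ne'
    · exact (ENNReal.ofReal_pos.2 (Real.rpow_pos_of_pos two_pos p)).ne'
    · norm_num
  set δ := ε' / 2 / Cfar with hδ
  have hδpos : 0 < δ := ENNReal.div_pos hε'2pos.ne' hCfar_top
  set f : Euc n → ℝ≥0∞ := fun x => ENNReal.ofReal (‖u x‖ ^ p) with hf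
  have hfmeas : Measurable f := ENNReal.measurable_ofReal.comp (meas_rpow hu.norm p)
  have hffin : ∫⁻ x, f x ≠ ∞ := by
    rw [hf]; simpa [lpPow] using hLp.ne
  obtain ⟨N, hN1, hNtail⟩ := tail_small n f hfmeas hffin δ hδpos
  set Cnear : ℝ≥0∞ := ENNReal.ofReal (N ^ (p * τ)) * magEnergy n p τ A u with hCnear
  have hCnear_top : Cnear ≠ ∞ := ENNReal.mul_ne_top ENNReal.ofReal_ne_top hE.ne
  have hev1 : ∀ᶠ s : ℝ in 𝓝[>] 0, s < τ :=
    eventually_of_mem (mem_nhdsWithin_of_mem_nhds (Iio_mem_nhds hτ0)) fun s hs => hs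
  have hev2 : ∀ᶠ s : ℝ in 𝓝[>] 0, ENNReal.ofReal s * Cnear < ε' / 2 := by
    have htend : Tendsto (fun s : ℝ => ENNReal.ofReal s * Cnear) (𝓝[>] 0) (𝓝 (0 * Cnear)) := by
      refine ENNReal.Tendsto.mul_const ?_ (Or.inr hCnear_top)
      have hid : Tendsto (fun s : ℝ => s) (𝓝[>] 0) (𝓝 0) :=
        tendsto_id.mono_left nhdsWithin_le_nhds
      have := (ENNReal.continuous_ofReal.tendsto 0).comp hid
      simpa [Function.comp_def] using this
    rw [zero_mul] at htend
    exact htend.eventually_lt_const hε'2pos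
  filter_upwards [hev1, hev2, self_mem_nhdsWithin] with s hsτ hsnear hs0
  have hs0' : (0:ℝ) < s := hs0
  set μ2 := (volume : Measure (Euc n)).prod (volume : Measure (Euc n)) with hμ2
  set nearS : Set (Euc n × Euc n) := {z | ‖z.1 - z.2‖ ≤ N} with hnearS
  set farS : Set (Euc n × Euc n) := {z | N < ‖z.1 - z.2‖} with hfarS
  have hsplit : magEnergyOn n p s A u (annReg n)
      ≤ (∫⁻ z in nearS, mkernel n p s A u z ∂μ2)
        + ∫⁻ z in annReg n ∩ farS, mkernel n p s A u z ∂μ2 := by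
    rw [magEnergyOn]
    calc ∫⁻ z in annReg n, mkernel n p s A u z ∂μ2
        ≤ ∫⁻ z in nearS ∪ (annReg n ∩ farS), mkernel n p s A u z ∂μ2 := by
          refine lintegral_mono_set fun z hz => ?_
          rcases le_or_gt ‖z.1 - z.2‖ N with h | h
          · exact Or.inl h
          · exact Or.inr ⟨hz, h⟩
      _ ≤ _ := lintegral_union_le _ _ _
  have hnear : ∫⁻ z in nearS, mkernel n p s A u z ∂μ2 ≤ Cnear := by
    calc ∫⁻ z in nearS, mkernel n p s A u z ∂μ2
        ≤ ∫⁻ z in nearS, ENNReal.ofReal (N ^ (p * τ)) * mkernel n p τ A u z ∂μ2 :=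
          setLIntegral_mono ((mkernel_meas n p τ A u hA hu).const_mul _) fun z hz =>
            near_ptwise n p τ s N hp hs0' hsτ.le hN1 A u z hz
      _ = ENNReal.ofReal (N ^ (p * τ)) * ∫⁻ z in nearS, mkernel n p τ A u z ∂μ2 :=
          lintegral_const_mul' _ _ ENNReal.ofReal_ne_top
      _ ≤ Cnear := by
          rw [hCnear, magEnergy]
          gcongr
          exact Measure.restrict_le_self
  -- far part
  set g1 : Euc n × Euc n → ℝ≥0∞ :=
    fun z => ENNReal.ofReal (‖u z.1‖ ^ p / ‖z.1 - z.2‖ ^ ((n:ℝ) + p * s)) with hg1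
  set g2 : Euc n × Euc n → ℝ≥0∞ :=
    fun z => ENNReal.ofReal (‖u z.2‖ ^ p / ‖z.1 - z.2‖ ^ ((n:ℝ) + p * s)) with hg2
  have hg1m : Measurable g1 := ENNReal.measurable_ofReal.comp
    ((meas_rpow (hu.comp measurable_fst).norm p).div
      (meas_rpow (measurable_fst.sub measurable_snd).norm _))
  have hg2m : Measurable g2 := ENNReal.measurable_ofReal.comp
    ((meas_rpow (hu.comp measurable_snd).norm p).div
      (meas_rpow (measurable_fst.sub measurable_snd).norm _))
  have hfar1 : ∫⁻ z in annReg n ∩ farS, mkernel n p s A u z ∂μ2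
      ≤ ENNReal.ofReal ((2:ℝ)^p) * ((∫⁻ z in annReg n ∩ farS, g1 z ∂μ2)
          + ∫⁻ z in annReg n ∩ farS, g2 z ∂μ2) := by
    calc ∫⁻ z in annReg n ∩ farS, mkernel n p s A u z ∂μ2
        ≤ ∫⁻ z in annReg n ∩ farS, ENNReal.ofReal ((2:ℝ)^p) * (g1 z + g2 z) ∂μ2 := by
          refine setLIntegral_mono ((hg1m.add hg2m).const_mul _) fun z hz => ?_
          have : N < ‖z.1 - z.2‖ := hz.2
          exact far_ptwise n p s hp A u z (by linarith)
      _ = ENNReal.ofReal ((2:ℝ)^p) * ∫⁻ z in annReg n ∩ farS, g1 z + g2 z ∂μ2 :=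
          lintegral_const_mul' _ _ ENNReal.ofReal_ne_top
      _ = _ := by rw [lintegral_add_left hg1m]
  set Aset : Set (Euc n) := {x | N ≤ 3 * ‖x‖} with hAset
  have hAsetm : MeasurableSet Aset :=
    measurableSet_le measurable_const (measurable_norm.const_mul 3)
  set h1 : Euc n → ℝ≥0∞ := Aset.indicator f with hh1def
  have hBsetm : MeasurableSet {w : Euc n | 1 < ‖w‖} :=
    measurableSet_lt measurable_const measurable_norm
  set h2 : Euc n → ℝ≥0∞ :=
    ({w : Euc n | 1 < ‖w‖}).indicator
      (fun w => ENNReal.ofReal (‖w‖ ^ (-((n:ℝ) + p * s)))) with hh2def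
  have hh1m : Measurable h1 := hfmeas.indicator hAsetm
  have hh2m : Measurable h2 :=
    (ENNReal.measurable_ofReal.comp (meas_rpow measurable_norm _)).indicator hBsetm
  set Rs : ℝ≥0∞ := ENNReal.ofReal ((2:ℝ)^(n:ℝ)) * volB
      * (ENNReal.ofReal (1 - 2 ^ (-(p * s))))⁻¹ with hRs
  have hint1 : ∫⁻ x, h1 x ≤ δ := by
    rw [hh1def, lintegral_indicator hAsetm]
    exact hNtail.le
  have hint2 : ∫⁻ w, h2 w ≤ Rs := by
    rw [hh2def, lintegral_indicator hBsetm, hRs]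
    have := radial_bound n (p * s) (by positivity)
    simpa [neg_add] using this
  have hptx : ∀ z ∈ annReg n ∩ farS, g1 z ≤ h1 z.1 * h2 (z.1 - z.2) := by
    intro z hz
    obtain ⟨⟨hz1, hz2⟩, hz3⟩ := hz
    have hz3' : N < ‖z.1 - z.2‖ := hz3
    have hns : ‖z.1 - z.2‖ ≤ ‖z.1‖ + ‖z.2‖ := norm_sub_le _ _
    have hx : z.1 ∈ Aset := by simp only [hAset, mem_setOf_eq]; linarith
    have hw : z.1 - z.2 ∈ {w : Euc n | 1 < ‖w‖} := by
      simp only [mem_setOf_eq]; linarith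
    rw [hh1def, hh2def, indicator_of_mem hx, indicator_of_mem hw]
    simp only [hf, hg1]
    rw [← ENNReal.ofReal_mul (by positivity)]
    apply le_of_eq
    congr 1
    rw [Real.rpow_neg (norm_nonneg _), div_eq_mul_inv]
  have hpty : ∀ z ∈ annReg n ∩ farS, g2 z ≤ h1 z.2 * h2 (z.1 - z.2) := by
    intro z hz
    obtain ⟨⟨hz1, hz2⟩, hz3⟩ := hz
    have hz3' : N < ‖z.1 - z.2‖ := hz3
    have hns : ‖z.1 - z.2‖ ≤ ‖z.1‖ + ‖z.2‖ := norm_sub_le _ _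
    have hx : z.2 ∈ Aset := by simp only [hAset, mem_setOf_eq]; linarith
    have hw : z.1 - z.2 ∈ {w : Euc n | 1 < ‖w‖} := by
      simp only [mem_setOf_eq]; linarith
    rw [hh1def, hh2def, indicator_of_mem hx, indicator_of_mem hw]
    simp only [hf, hg2]
    rw [← ENNReal.ofReal_mul (by positivity)]
    apply le_of_eq
    congr 1
    rw [Real.rpow_neg (norm_nonneg _), div_eq_mul_inv]
  have hg1int : ∫⁻ z in annReg n ∩ farS, g1 z ∂μ2 ≤ δ * Rs := by
    calc ∫⁻ z in annReg n ∩ farS, g1 z ∂μ2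
        ≤ ∫⁻ z in annReg n ∩ farS, h1 z.1 * h2 (z.1 - z.2) ∂μ2 :=
          setLIntegral_mono
            ((hh1m.comp measurable_fst).mul
              (hh2m.comp (measurable_fst.sub measurable_snd))) hptx
      _ ≤ ∫⁻ z, h1 z.1 * h2 (z.1 - z.2) ∂μ2 := setLIntegral_le_lintegral _ _
      _ = (∫⁻ x, h1 x) * ∫⁻ w, h2 w := prod_mul_fst n h1 h2 hh1m hh2m
      _ ≤ δ * Rs := mul_le_mul' hint1 hint2
  have hg2int : ∫⁻ z in annReg n ∩ farS, g2 z ∂μ2 ≤ δ * Rs := by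
    calc ∫⁻ z in annReg n ∩ farS, g2 z ∂μ2
        ≤ ∫⁻ z in annReg n ∩ farS, h1 z.2 * h2 (z.1 - z.2) ∂μ2 :=
          setLIntegral_mono
            ((hh1m.comp measurable_snd).mul
              (hh2m.comp (measurable_fst.sub measurable_snd))) hpty
      _ ≤ ∫⁻ z, h1 z.2 * h2 (z.1 - z.2) ∂μ2 := setLIntegral_le_lintegral _ _
      _ = (∫⁻ x, h1 x) * ∫⁻ w, h2 w := prod_mul_snd n h1 h2 hh1m hh2m
      _ ≤ δ * Rs := mul_le_mul' hint1 hint2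
  have hsR : ENNReal.ofReal s * Rs ≤ R := by
    have h2lt : (2:ℝ) ^ (-(p * s)) < 1 :=
      Real.rpow_lt_one_of_one_lt_of_neg one_lt_two (by nlinarith)
    have hpos : (0:ℝ) < 1 - 2 ^ (-(p * s)) := by linarith
    calc ENNReal.ofReal s * Rs
        = ENNReal.ofReal ((2:ℝ)^(n:ℝ)) * volB
            * (ENNReal.ofReal s * (ENNReal.ofReal (1 - 2 ^ (-(p * s))))⁻¹) := by
          rw [hRs]; ring
      _ = ENNReal.ofReal ((2:ℝ)^(n:ℝ)) * volB
            * ENNReal.ofReal (s / (1 - 2 ^ (-(p * s)))) := by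
          rw [ENNReal.ofReal_div_of_pos hpos, div_eq_mul_inv]
      _ ≤ ENNReal.ofReal ((2:ℝ)^(n:ℝ)) * volB * ENNReal.ofReal K := by
          gcongr
          rw [hK]
          exact s_div_bound p τ s hp hs0' hsτ.le
      _ = R := hR.symm
  have hfarfin : ENNReal.ofReal s * (∫⁻ z in annReg n ∩ farS, mkernel n p s A u z ∂μ2)
      ≤ ε' / 2 := by
    calc ENNReal.ofReal s * (∫⁻ z in annReg n ∩ farS, mkernel n p s A u z ∂μ2)
        ≤ ENNReal.ofReal s * (ENNReal.ofReal ((2:ℝ)^p) * (δ * Rs + δ * Rs)) := by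
          gcongr
          refine hfar1.trans ?_
          gcongr
      _ = ENNReal.ofReal ((2:ℝ)^p) * 2 * δ * (ENNReal.ofReal s * Rs) := by ring
      _ ≤ ENNReal.ofReal ((2:ℝ)^p) * 2 * δ * R := by gcongr
      _ = Cfar * δ := by rw [hCfar]; ring
      _ = ε' / 2 := by
          rw [hδ]
          exact ENNReal.mul_div_cancel hCfar_pos hCfar_top
  calc ENNReal.ofReal s * magEnergyOn n p s A u (annReg n)
      ≤ ENNReal.ofReal s * ((∫⁻ z in nearS, mkernel n p s A u z ∂μ2)
          + ∫⁻ z in annReg n ∩ farS, mkernel n p s A u z ∂μ2) := by gcongr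
    _ = ENNReal.ofReal s * (∫⁻ z in nearS, mkernel n p s A u z ∂μ2)
        + ENNReal.ofReal s * (∫⁻ z in annReg n ∩ farS, mkernel n p s A u z ∂μ2) :=
        mul_add _ _ _
    _ ≤ ε' / 2 + ε' / 2 := by
        refine add_le_add ?_ hfarfin
        refine le_trans ?_ hsnear.le
        gcongr
    _ = ε' := ENNReal.add_halves ε'
    _ ≤ ε := min_le_left _ _
end
end

section
/- Upper bound for the off-diagonal energy: Let n ≥ 1, p ∈ [1,∞), and let u ∈ L^p(ℝⁿ,ℂ) satisfy ∫_{ℝⁿ} |u(x)|^p |x|^{-σp} dx < ∞ for some σ ∈ (0,1). Then limsup_{s→0⁺} 2s ∬_{\{|y| ≥ 2|x|\}} |u(x) - e^{i(x-y)·A((x+y)/2)} u(y)|^p / |x-y|^{n+sp} dx dy ≤ (4π^{n/2}/(p Γ(n/2))) ‖u‖_{L^p(ℝⁿ)}^p. -/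
open MeasureTheory Filter Set
open scoped ENNReal Topology

noncomputable section

/-! ### Auxiliary lemmas -/

/-- Unit-ball volume constant. -/
def vC (n : ℕ) : ℝ := Real.sqrt Real.pi ^ n / Real.Gamma ((n : ℝ) / 2 + 1)

lemma vC_pos (n : ℕ) : 0 < vC n := by
  have h1 : 0 < Real.sqrt Real.pi := Real.sqrt_pos.2 Real.pi_pos
  have h2 : 0 < Real.Gamma ((n : ℝ) / 2 + 1) := Real.Gamma_pos_of_pos (by positivity)
  exact div_pos (pow_pos h1 n) h2

lemma volume_ball' (n : ℕ) (hn : 0 < n) (R : ℝ) :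
    volume (Metric.ball (0 : Euc n) R) = ENNReal.ofReal R ^ n * ENNReal.ofReal (vC n) := by
  haveI : Nonempty (Fin n) := ⟨⟨0, hn⟩⟩
  rw [EuclideanSpace.volume_ball]
  simp [vC]

lemma volume_closedBall' (n : ℕ) (hn : 0 < n) (R : ℝ) :
    volume (Metric.closedBall (0 : Euc n) R) = ENNReal.ofReal R ^ n * ENNReal.ofReal (vC n) := by
  haveI : Nonempty (Fin n) := ⟨⟨0, hn⟩⟩
  rw [EuclideanSpace.volume_closedBall]
  simp [vC]

lemma div_rpow_neg (a b c : ℝ) (hb : 0 ≤ b) : a / b ^ c = a * b ^ (-c) := by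
  rw [Real.rpow_neg hb, div_eq_mul_inv]

lemma exterior_bound (n : ℕ) (hn : 0 < n) {r R : ℝ} (hnr : (n : ℝ) < r) (hR : 0 < R) :
    ∫⁻ w in {w : Euc n | R ≤ ‖w‖}, ENNReal.ofReal (‖w‖ ^ (-r)) ≤
      ENNReal.ofReal (vC n * (r / (r - n)) * R ^ ((n : ℝ) - r)) := by
  have hrpos : 0 < r := lt_of_le_of_lt (Nat.cast_nonneg n) hnr
  have hS : MeasurableSet {w : Euc n | R ≤ ‖w‖} :=
    measurableSet_le measurable_const measurable_norm
  set T : ℝ := R ^ (-r) with hT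
  have hTpos : 0 < T := Real.rpow_pos_of_pos hR _
  have hmble : AEMeasurable (fun w : Euc n => ‖w‖ ^ (-r))
      (volume.restrict {w : Euc n | R ≤ ‖w‖}) := by
    apply Measurable.aemeasurable; fun_prop
  rw [lintegral_eq_lintegral_meas_lt _
    (ae_of_all _ fun w => Real.rpow_nonneg (norm_nonneg w) _) hmble]
  set e : ℝ := -((n : ℝ) / r) with he
  have hnr1 : (n : ℝ) / r < 1 := (div_lt_one hrpos).2 hnr
  have he1 : -1 < e := by rw [he]; linarith
  have he2 : 0 < e + 1 := by linarith
  have hstep : ∀ t ∈ Ioi (0:ℝ), (volume.restrict {w : Euc n | R ≤ ‖w‖}) {w | t < ‖w‖ ^ (-r)}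
      ≤ (Ioo (0:ℝ) T).indicator (fun t => ENNReal.ofReal (vC n) * ENNReal.ofReal (t ^ e)) t := by
    intro t ht
    have ht0 : (0:ℝ) < t := ht
    rw [Measure.restrict_apply' hS]
    by_cases htT : t < T
    · have hsub : {w : Euc n | t < ‖w‖ ^ (-r)} ∩ {w : Euc n | R ≤ ‖w‖}
          ⊆ Metric.ball 0 (t ^ (-(1/r))) := by
        rintro w ⟨hw1, hw2⟩
        have hw1' : t < ‖w‖ ^ (-r) := hw1
        have hw2' : R ≤ ‖w‖ := hw2
        have hwpos : 0 < ‖w‖ := lt_of_lt_of_le hR hw2'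
        have h1 : t ^ (1/r) < (‖w‖ ^ (-r)) ^ (1/r) :=
          Real.rpow_lt_rpow ht0.le hw1' (by positivity)
        have h2 : (‖w‖ ^ (-r)) ^ (1/r) = ‖w‖⁻¹ := by
          rw [← Real.rpow_mul (norm_nonneg w), show -r * (1/r) = -1 by field_simp,
            Real.rpow_neg_one]
        rw [h2] at h1
        have h3 : ‖w‖ < t ^ (-(1/r)) := by
          rw [Real.rpow_neg ht0.le]
          have h4 := inv_strictAnti₀ (Real.rpow_pos_of_pos ht0 (1/r)) h1
          rwa [inv_inv] at h4
        simpa [mem_ball_zero_iff] using h3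
      refine le_trans (measure_mono hsub) ?_
      rw [Set.indicator_of_mem (show t ∈ Ioo (0:ℝ) T from ⟨ht0, htT⟩), volume_ball' n hn]
      have hρ : (0:ℝ) ≤ t ^ (-(1/r)) := Real.rpow_nonneg ht0.le _
      rw [← ENNReal.ofReal_pow hρ, mul_comm]
      refine le_of_eq ?_
      congr 1
      rw [← Real.rpow_natCast (t ^ (-(1/r))) n, ← Real.rpow_mul ht0.le]
      congr 1
      rw [he]; field_simp
    · have hempty : {w : Euc n | t < ‖w‖ ^ (-r)} ∩ {w : Euc n | R ≤ ‖w‖} = ∅ := by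
        ext w
        simp only [mem_inter_iff, mem_setOf_eq, mem_empty_iff_false, iff_false, not_and]
        intro hw1 hw2
        have hle : ‖w‖ ^ (-r) ≤ T := by
          rw [hT]
          exact Real.rpow_le_rpow_of_nonpos hR hw2 (by linarith)
        exact absurd (hw1.trans_le hle) (not_lt.2 (not_lt.1 htT))
      rw [hempty, measure_empty]
      exact zero_le
  calc ∫⁻ t in Ioi (0:ℝ), (volume.restrict {w : Euc n | R ≤ ‖w‖}) {w | t < ‖w‖ ^ (-r)}
      ≤ ∫⁻ t in Ioi (0:ℝ),
          (Ioo (0:ℝ) T).indicator (fun t => ENNReal.ofReal (vC n) * ENNReal.ofReal (t ^ e)) t :=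
        setLIntegral_mono' measurableSet_Ioi hstep
    _ = ∫⁻ t in Ioo (0:ℝ) T, ENNReal.ofReal (vC n) * ENNReal.ofReal (t ^ e) := by
        rw [lintegral_indicator measurableSet_Ioo, Measure.restrict_restrict measurableSet_Ioo,
          inter_eq_self_of_subset_left Ioo_subset_Ioi_self]
    _ = ENNReal.ofReal (vC n) * ∫⁻ t in Ioo (0:ℝ) T, ENNReal.ofReal (t ^ e) :=
        lintegral_const_mul' _ _ ENNReal.ofReal_ne_top
    _ = ENNReal.ofReal (vC n) * ENNReal.ofReal (∫ t in Ioo (0:ℝ) T, t ^ e) := by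
        rw [← ofReal_integral_eq_lintegral_ofReal ((intervalIntegral.integrableOn_Ioo_rpow_iff hTpos).2 he1)
          ((ae_restrict_iff' measurableSet_Ioo).2
            (ae_of_all _ fun t ht => (Real.rpow_pos_of_pos ht.1 _).le))]
    _ ≤ ENNReal.ofReal (vC n * (r / (r - n)) * R ^ ((n : ℝ) - r)) := by
        rw [← ENNReal.ofReal_mul (vC_pos n).le]
        apply ENNReal.ofReal_le_ofReal
        have hcalc : ∫ t in Ioo (0:ℝ) T, t ^ e = T ^ (e+1) / (e+1) := by
          rw [← integral_Ioc_eq_integral_Ioo, ← intervalIntegral.integral_of_le hTpos.le,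
            integral_rpow (Or.inl he1), Real.zero_rpow (by linarith : e + (1:ℝ) ≠ 0)]
          ring
        have h1 : e + 1 = (r - (n:ℝ))/r := by rw [he]; field_simp; ring
        have h2 : T ^ (e + 1) = R ^ ((n:ℝ) - r) := by
          rw [hT, ← Real.rpow_mul hR.le, h1]
          congr 1
          field_simp
          ring
        rw [hcalc, h2, h1]
        rw [div_div_eq_mul_div]
        refine le_of_eq ?_
        have hrn : r - (n:ℝ) ≠ 0 := by linarith
        field_simp

lemma sec_bound (n : ℕ) (hn : 0 < n) {r : ℝ} (hnr : (n:ℝ) < r) {x : Euc n} (hx : x ≠ 0) :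
    ∫⁻ y in {y : Euc n | 2 * ‖x‖ ≤ ‖y‖}, ENNReal.ofReal (‖x - y‖ ^ (-r)) ≤
      ENNReal.ofReal (vC n * (r / (r - n)) * ‖x‖ ^ ((n:ℝ) - r)) := by
  have hxpos : 0 < ‖x‖ := norm_pos_iff.2 hx
  have hSm : MeasurableSet {y : Euc n | 2 * ‖x‖ ≤ ‖y‖} :=
    measurableSet_le measurable_const measurable_norm
  have hRm : MeasurableSet {w : Euc n | ‖x‖ ≤ ‖w‖} :=
    measurableSet_le measurable_const measurable_norm
  calc ∫⁻ y in {y : Euc n | 2 * ‖x‖ ≤ ‖y‖}, ENNReal.ofReal (‖x - y‖ ^ (-r))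
      = ∫⁻ y, ({y : Euc n | 2 * ‖x‖ ≤ ‖y‖}).indicator
          (fun y => ENNReal.ofReal (‖x - y‖ ^ (-r))) y := (lintegral_indicator hSm _).symm
    _ ≤ ∫⁻ y, ({w : Euc n | ‖x‖ ≤ ‖w‖}).indicator
          (fun w => ENNReal.ofReal (‖w‖ ^ (-r))) (y - x) := by
        apply lintegral_mono; intro y
        by_cases h : 2 * ‖x‖ ≤ ‖y‖
        · have h1 : ‖x‖ ≤ ‖y - x‖ := by
            have h2 := norm_sub_norm_le y x
            linarith
          simp only [Set.indicator_of_mem (show y ∈ {y : Euc n | 2 * ‖x‖ ≤ ‖y‖} from h),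
            Set.indicator_of_mem (show y - x ∈ {w : Euc n | ‖x‖ ≤ ‖w‖} from h1)]
          exact le_of_eq (by rw [norm_sub_rev])
        · simp only [Set.indicator_of_notMem (show y ∉ {y : Euc n | 2 * ‖x‖ ≤ ‖y‖} from h)]
          exact zero_le
    _ = ∫⁻ w, ({w : Euc n | ‖x‖ ≤ ‖w‖}).indicator
          (fun w => ENNReal.ofReal (‖w‖ ^ (-r))) w := by
        exact lintegral_sub_right_eq_self
          (({w : Euc n | ‖x‖ ≤ ‖w‖}).indicator fun w => ENNReal.ofReal (‖w‖ ^ (-r))) x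
    _ = ∫⁻ w in {w : Euc n | ‖x‖ ≤ ‖w‖}, ENNReal.ofReal (‖w‖ ^ (-r)) :=
        lintegral_indicator hRm _
    _ ≤ _ := exterior_bound n hn hnr hxpos

lemma sec2_bound (n : ℕ) (hn : 0 < n) {r : ℝ} (hnr : (n:ℝ) < r) {y : Euc n} (hy : y ≠ 0) :
    ∫⁻ x in {x : Euc n | 2 * ‖x‖ ≤ ‖y‖}, ENNReal.ofReal (‖x - y‖ ^ (-r)) ≤
      ENNReal.ofReal (vC n * (‖y‖ / 2) ^ ((n:ℝ) - r)) := by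
  have hy0 : 0 < ‖y‖ := norm_pos_iff.2 hy
  have hρ : 0 < ‖y‖ / 2 := by linarith
  have hSm : MeasurableSet {x : Euc n | 2 * ‖x‖ ≤ ‖y‖} :=
    measurableSet_le (by fun_prop) measurable_const
  have hsub : {x : Euc n | 2 * ‖x‖ ≤ ‖y‖} ⊆ Metric.closedBall 0 (‖y‖ / 2) := by
    intro x hx
    have hx' : 2 * ‖x‖ ≤ ‖y‖ := hx
    rw [Metric.mem_closedBall, dist_zero_right]
    linarith
  have hpt : ∀ x ∈ {x : Euc n | 2 * ‖x‖ ≤ ‖y‖},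
      ENNReal.ofReal (‖x - y‖ ^ (-r)) ≤ ENNReal.ofReal ((‖y‖ / 2) ^ (-r)) := by
    intro x hx
    have hx' : 2 * ‖x‖ ≤ ‖y‖ := hx
    apply ENNReal.ofReal_le_ofReal
    apply Real.rpow_le_rpow_of_nonpos hρ ?_ (by
      have : 0 < r := lt_of_le_of_lt (Nat.cast_nonneg n) hnr
      linarith)
    have h1 : ‖y‖ - ‖x‖ ≤ ‖y - x‖ := norm_sub_norm_le y x
    rw [norm_sub_rev]
    linarith
  calc ∫⁻ x in {x : Euc n | 2 * ‖x‖ ≤ ‖y‖}, ENNReal.ofReal (‖x - y‖ ^ (-r))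
      ≤ ∫⁻ _ in {x : Euc n | 2 * ‖x‖ ≤ ‖y‖}, ENNReal.ofReal ((‖y‖ / 2) ^ (-r)) :=
        setLIntegral_mono' hSm hpt
    _ = ENNReal.ofReal ((‖y‖ / 2) ^ (-r)) * volume {x : Euc n | 2 * ‖x‖ ≤ ‖y‖} := by
        rw [setLIntegral_const]
    _ ≤ ENNReal.ofReal ((‖y‖ / 2) ^ (-r)) * volume (Metric.closedBall (0 : Euc n) (‖y‖ / 2)) :=
        mul_le_mul_right (measure_mono hsub) _
    _ = ENNReal.ofReal (vC n * (‖y‖ / 2) ^ ((n:ℝ) - r)) := by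
        rw [volume_closedBall' n hn, ← ENNReal.ofReal_pow hρ.le,
          ← ENNReal.ofReal_mul (by positivity : (0:ℝ) ≤ (‖y‖/2) ^ n),
          ← ENNReal.ofReal_mul (Real.rpow_nonneg hρ.le _)]
        congr 1
        have h2 : (‖y‖/2) ^ (-r) * (‖y‖/2) ^ ((n:ℕ):ℝ) = (‖y‖/2) ^ ((n:ℝ) - r) := by
          rw [← Real.rpow_add hρ]
          congr 1
          ring
        calc (‖y‖/2) ^ (-r) * ((‖y‖/2) ^ n * vC n)
            = ((‖y‖/2) ^ (-r) * (‖y‖/2) ^ ((n:ℕ):ℝ)) * vC n := by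
              rw [Real.rpow_natCast]; ring
          _ = vC n * (‖y‖/2) ^ ((n:ℝ) - r) := by rw [h2]; ring

lemma rpow_one_div_rpow (p : ℝ) (hp0 : 0 < p) (x : ℝ≥0∞) : (x ^ (1/p)) ^ p = x := by
  rw [← ENNReal.rpow_mul, one_div, inv_mul_cancel₀ hp0.ne', ENNReal.rpow_one]

lemma mul_mink (p : ℝ) (hp0 : 0 < p) (c X Y : ℝ≥0∞) :
    c * (X ^ (1/p) + Y ^ (1/p)) ^ p = ((c*X) ^ (1/p) + (c*Y) ^ (1/p)) ^ p := by
  calc c * (X ^ (1/p) + Y ^ (1/p)) ^ p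
      = ((c ^ (1/p)) ^ p) * (X ^ (1/p) + Y ^ (1/p)) ^ p := by rw [rpow_one_div_rpow p hp0]
    _ = (c ^ (1/p) * (X ^ (1/p) + Y ^ (1/p))) ^ p :=
        (ENNReal.mul_rpow_of_nonneg _ _ hp0.le).symm
    _ = ((c*X) ^ (1/p) + (c*Y) ^ (1/p)) ^ p := by
        rw [mul_add, ← ENNReal.mul_rpow_of_nonneg c X (by positivity : (0:ℝ) ≤ 1/p),
          ← ENNReal.mul_rpow_of_nonneg c Y (by positivity : (0:ℝ) ≤ 1/p)]

lemma ofReal_npow_mul (c : ℂ) (p b : ℝ) :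
    ENNReal.ofReal (‖c‖ ^ p * b) = ENNReal.ofReal (‖c‖ ^ p) * ENNReal.ofReal b :=
  ENNReal.ofReal_mul (by positivity)

lemma energy_le (n : ℕ) {p s : ℝ} (hp : 1 ≤ p) (hs : 0 < s) (A : Euc n → Euc n)
    {u : Euc n → ℂ} (hu : Measurable u) (hA : Measurable A) :
    magEnergyOn n p s A u (farReg n) ≤
      ((∫⁻ z in farReg n, ENNReal.ofReal (‖u z.1‖ ^ p * ‖z.1 - z.2‖ ^ (-((n:ℝ) + p * s)))
          ∂((volume : Measure (Euc n)).prod volume)) ^ (1/p) +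
       (∫⁻ z in farReg n, ENNReal.ofReal (‖u z.2‖ ^ p * ‖z.1 - z.2‖ ^ (-((n:ℝ) + p * s)))
          ∂((volume : Measure (Euc n)).prod volume)) ^ (1/p)) ^ p := by
  have hp0 : (0:ℝ) < p := lt_of_lt_of_le one_pos hp
  set r : ℝ := (n:ℝ) + p * s with hrdef
  have hr0 : 0 < r := by positivity
  set μ2 := ((volume : Measure (Euc n)).prod volume).restrict (farReg n) with hμ2
  have hc0 : ∀ z : Euc n × Euc n, (0:ℝ) ≤ ‖z.1 - z.2‖ ^ (-(r / p)) :=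
    fun z => Real.rpow_nonneg (norm_nonneg _) _
  have key : ∀ (a : ℝ) (z : Euc n × Euc n), 0 ≤ a →
      (ENNReal.ofReal (a * ‖z.1 - z.2‖ ^ (-(r / p)))) ^ p
        = ENNReal.ofReal (a ^ p * ‖z.1 - z.2‖ ^ (-r)) := by
    intro a z ha
    rw [ENNReal.ofReal_rpow_of_nonneg (mul_nonneg ha (hc0 z)) hp0.le]
    congr 1
    rw [Real.mul_rpow ha (hc0 z), ← Real.rpow_mul (norm_nonneg _),
      show -(r/p) * p = -r by field_simp]
  have hdiv : ∀ (a b : ℝ), 0 ≤ b → a / b ^ r = a * b ^ (-r) := fun a b hb =>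
    div_rpow_neg a b r hb
  have hE : magEnergyOn n p s A u (farReg n)
      = ∫⁻ z, (ENNReal.ofReal (‖u z.1 - mphase n A z.1 z.2 * u z.2‖
          * ‖z.1 - z.2‖ ^ (-(r / p)))) ^ p ∂μ2 := by
    unfold magEnergyOn mkernel
    apply lintegral_congr
    intro z
    rw [key _ z (norm_nonneg _), hdiv _ _ (norm_nonneg _)]
  set F₁ : Euc n × Euc n → ℝ≥0∞ :=
    fun z => ENNReal.ofReal (‖u z.1‖ * ‖z.1 - z.2‖ ^ (-(r / p))) with hF₁
  set F₂ : Euc n × Euc n → ℝ≥0∞ :=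
    fun z => ENNReal.ofReal (‖u z.2‖ * ‖z.1 - z.2‖ ^ (-(r / p))) with hF₂
  have hF₁m : AEMeasurable F₁ μ2 := by
    apply Measurable.aemeasurable; rw [hF₁]; fun_prop
  have hF₂m : AEMeasurable F₂ μ2 := by
    apply Measurable.aemeasurable; rw [hF₂]; fun_prop
  have hmono : ∀ z : Euc n × Euc n,
      (ENNReal.ofReal (‖u z.1 - mphase n A z.1 z.2 * u z.2‖ * ‖z.1 - z.2‖ ^ (-(r / p)))) ^ p
        ≤ ((F₁ + F₂) z) ^ p := by
    intro z
    apply ENNReal.rpow_le_rpow ?_ hp0.le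
    have hN : ‖u z.1 - mphase n A z.1 z.2 * u z.2‖ ≤ ‖u z.1‖ + ‖u z.2‖ := by
      refine (norm_sub_le _ _).trans ?_
      rw [norm_mul, mphase_norm, one_mul]
    calc ENNReal.ofReal (‖u z.1 - mphase n A z.1 z.2 * u z.2‖ * ‖z.1 - z.2‖ ^ (-(r / p)))
        ≤ ENNReal.ofReal ((‖u z.1‖ + ‖u z.2‖) * ‖z.1 - z.2‖ ^ (-(r / p))) :=
          ENNReal.ofReal_le_ofReal (mul_le_mul_of_nonneg_right hN (hc0 z))
      _ = (F₁ + F₂) z := by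
          rw [add_mul]
          exact ENNReal.ofReal_add (by positivity) (by positivity)
  have e1 : ∫⁻ z, F₁ z ^ p ∂μ2
      = ∫⁻ z in farReg n, ENNReal.ofReal (‖u z.1‖ ^ p * ‖z.1 - z.2‖ ^ (-((n:ℝ) + p * s)))
          ∂((volume : Measure (Euc n)).prod volume) :=
    lintegral_congr fun z => key _ z (norm_nonneg _)
  have e2 : ∫⁻ z, F₂ z ^ p ∂μ2
      = ∫⁻ z in farReg n, ENNReal.ofReal (‖u z.2‖ ^ p * ‖z.1 - z.2‖ ^ (-((n:ℝ) + p * s)))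
          ∂((volume : Measure (Euc n)).prod volume) :=
    lintegral_congr fun z => key _ z (norm_nonneg _)
  rw [← e1, ← e2, hE]
  calc ∫⁻ z, (ENNReal.ofReal (‖u z.1 - mphase n A z.1 z.2 * u z.2‖
          * ‖z.1 - z.2‖ ^ (-(r / p)))) ^ p ∂μ2
      ≤ ∫⁻ z, ((F₁ + F₂) z) ^ p ∂μ2 := lintegral_mono hmono
    _ = ((∫⁻ z, ((F₁ + F₂) z) ^ p ∂μ2) ^ (1/p)) ^ p := (rpow_one_div_rpow p hp0 _).symm
    _ ≤ ((∫⁻ z, F₁ z ^ p ∂μ2) ^ (1/p) + (∫⁻ z, F₂ z ^ p ∂μ2) ^ (1/p)) ^ p :=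
        ENNReal.rpow_le_rpow (ENNReal.lintegral_Lp_add_le hF₁m hF₂m hp) hp0.le

set_option maxHeartbeats 1000000 in
/-- upper bound for the off-diagonal energy. -/
theorem offdiagonal_energy_limsup (n : ℕ) (p σ : ℝ) (hn : 1 ≤ n) (hp : 1 ≤ p)
    (hσ : σ ∈ Ioo (0:ℝ) 1) (A : Euc n → Euc n) (hA : Measurable A)
    (u : Euc n → ℂ) (hu : Measurable u) (hLp : lpPow n p u < ⊤)
    (hw : (∫⁻ x, ENNReal.ofReal (‖u x‖ ^ p / ‖x‖ ^ (σ * p))) < ⊤) :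
    limsup (fun s : ℝ => 2 * ENNReal.ofReal s * magEnergyOn n p s A u (farReg n))
      (𝓝[>] (0:ℝ)) ≤ MSconst n p * lpPow n p u := by
  obtain ⟨hσ0, hσ1⟩ := hσ
  have hp0 : (0:ℝ) < p := lt_of_lt_of_le one_pos hp
  have hn0 : 0 < n := hn
  have hnR : (0:ℝ) < n := by exact_mod_cast hn0
  set l := 𝓝[>] (0:ℝ) with hl
  -- the singleton {0} is null
  have hzero : (volume : Measure (Euc n)) {(0 : Euc n)} = 0 := by
    refine measure_mono_null (by simp [Metric.closedBall_zero] :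
      {(0:Euc n)} ⊆ Metric.closedBall (0:Euc n) 0) ?_
    rw [volume_closedBall' n hn0 0]
    simp [hn0.ne']
  -- the weighted integrals
  set W : ℝ → ℝ≥0∞ := fun t => ∫⁻ x, ENNReal.ofReal (‖u x‖ ^ p * ‖x‖ ^ (-(p * t))) with hWdef
  have hWmeas : ∀ t : ℝ, Measurable fun x : Euc n =>
      ENNReal.ofReal (‖u x‖ ^ p * ‖x‖ ^ (-(p * t))) := fun t => by fun_prop
  -- convergence of the weighted integrals to the Lp norm
  have hWlim : Tendsto W l (𝓝 (lpPow n p u)) := by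
    have hfin : (∫⁻ x, (ENNReal.ofReal (‖u x‖ ^ p * ‖x‖ ^ (-(p * σ)))
        + ENNReal.ofReal (‖u x‖ ^ p))) ≠ ⊤ := by
      rw [lintegral_add_left (by fun_prop)]
      have h1 : (∫⁻ x, ENNReal.ofReal (‖u x‖ ^ p * ‖x‖ ^ (-(p * σ)))) < ⊤ := by
        refine lt_of_eq_of_lt ?_ hw
        apply lintegral_congr
        intro x
        rw [div_rpow_neg _ _ _ (norm_nonneg x), mul_comm σ p]
      exact (ENNReal.add_lt_top.2 ⟨h1, hLp⟩).ne
    have H := tendsto_lintegral_filter_of_dominated_convergence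
      (μ := (volume : Measure (Euc n))) (l := l)
      (F := fun t x => ENNReal.ofReal (‖u x‖ ^ p * ‖x‖ ^ (-(p * t))))
      (f := fun x => ENNReal.ofReal (‖u x‖ ^ p))
      (fun x => ENNReal.ofReal (‖u x‖ ^ p * ‖x‖ ^ (-(p * σ))) + ENNReal.ofReal (‖u x‖ ^ p))
      (Eventually.of_forall fun t => hWmeas t)
      (by
        filter_upwards [Ioo_mem_nhdsGT_of_mem (left_mem_Ico.2 hσ0)] with t ht
        apply ae_of_all
        intro x
        have hxle : ‖x‖ ^ (-(p * t)) ≤ ‖x‖ ^ (-(p * σ)) + 1 := by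
          rcases eq_or_lt_of_le (norm_nonneg x) with h0 | h0
          · rw [← h0, Real.zero_rpow (by nlinarith [ht.1] : -(p*t) ≠ 0),
              Real.zero_rpow (by nlinarith : -(p*σ) ≠ 0)]
            norm_num
          · rcases le_or_gt ‖x‖ 1 with h1 | h1
            · have h2 : ‖x‖ ^ (-(p*t)) ≤ ‖x‖ ^ (-(p*σ)) :=
                Real.rpow_le_rpow_of_exponent_ge h0 h1 (by nlinarith [ht.2.le])
              linarith
            · have h2 : ‖x‖ ^ (-(p*t)) ≤ 1 :=
                Real.rpow_le_one_of_one_le_of_nonpos h1.le (by nlinarith [ht.1])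
              have h3 : (0:ℝ) ≤ ‖x‖ ^ (-(p*σ)) := Real.rpow_nonneg h0.le _
              linarith
        have ha : (0:ℝ) ≤ ‖u x‖ ^ p := by positivity
        calc ENNReal.ofReal (‖u x‖ ^ p * ‖x‖ ^ (-(p * t)))
            ≤ ENNReal.ofReal (‖u x‖ ^ p * ‖x‖ ^ (-(p * σ)) + ‖u x‖ ^ p) :=
              ENNReal.ofReal_le_ofReal
                ((mul_le_mul_of_nonneg_left hxle ha).trans_eq (by ring))
          _ = _ := ENNReal.ofReal_add (by positivity) ha)
      hfin
      (by
        filter_upwards [compl_mem_ae_iff.2 hzero] with x hx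
        have hx0 : x ≠ 0 := hx
        have hxpos : 0 < ‖x‖ := norm_pos_iff.2 hx0
        have h1 : Tendsto (fun t : ℝ => ‖x‖ ^ (-(p * t))) (𝓝 0) (𝓝 1) := by
          have heq : ∀ t : ℝ, ‖x‖ ^ (-(p*t)) = Real.exp (Real.log ‖x‖ * (-(p*t))) :=
            fun t => Real.rpow_def_of_pos hxpos _
          simp_rw [heq]
          have h2 : Tendsto (fun t : ℝ => Real.log ‖x‖ * (-(p*t))) (𝓝 0) (𝓝 0) := by
            have hcont : Continuous fun t : ℝ => Real.log ‖x‖ * (-(p*t)) := by continuity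
            have h2' := hcont.tendsto (0:ℝ)
            simpa using h2'
          simpa [Function.comp_def] using (Real.continuous_exp.tendsto 0).comp h2
        have h3 : Tendsto (fun t : ℝ => ENNReal.ofReal (‖u x‖ ^ p * ‖x‖ ^ (-(p * t))))
            (𝓝 0) (𝓝 (ENNReal.ofReal (‖u x‖ ^ p * 1))) :=
          (ENNReal.continuous_ofReal.tendsto _).comp (tendsto_const_nhds.mul h1)
        rw [mul_one] at h3
        exact h3.mono_left nhdsWithin_le_nhds)
    exact H
  -- the two constants
  set K : ℝ → ℝ≥0∞ := fun t => ENNReal.ofReal (vC n * (2*n/p + 2*t)) with hKdef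
  set L : ℝ → ℝ≥0∞ := fun t => ENNReal.ofReal (2*t*(vC n * (2:ℝ)^(p*t))) with hLdef
  have hfarm : MeasurableSet (farReg n) := measurableSet_le (by fun_prop) (by fun_prop)
  -- bound for the first term
  have hbound1 : ∀ t ∈ Ioo (0:ℝ) σ,
      2 * ENNReal.ofReal t * (∫⁻ z in farReg n,
        ENNReal.ofReal (‖u z.1‖ ^ p * ‖z.1 - z.2‖ ^ (-((n:ℝ) + p * t)))
        ∂((volume : Measure (Euc n)).prod volume)) ≤ K t * W t := by
    intro t ht
    have ht0 : (0:ℝ) < t := ht.1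
    set r : ℝ := (n:ℝ) + p * t with hrdef
    have hnr : (n:ℝ) < r := by rw [hrdef]; nlinarith
    have hrn : r - (n:ℝ) = p * t := by rw [hrdef]; ring
    have hrnpos : (0:ℝ) < r - n := by rw [hrn]; positivity
    have g₁meas : Measurable fun z : Euc n × Euc n =>
        ENNReal.ofReal (‖u z.1‖ ^ p * ‖z.1 - z.2‖ ^ (-r)) := by fun_prop
    have hton : (∫⁻ z in farReg n, ENNReal.ofReal (‖u z.1‖ ^ p * ‖z.1 - z.2‖ ^ (-r))
          ∂((volume : Measure (Euc n)).prod volume))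
        = ∫⁻ x, ENNReal.ofReal (‖u x‖ ^ p)
            * ∫⁻ y in {y : Euc n | 2 * ‖x‖ ≤ ‖y‖}, ENNReal.ofReal (‖x - y‖ ^ (-r)) := by
      rw [← lintegral_indicator hfarm, lintegral_prod _ (g₁meas.indicator hfarm).aemeasurable]
      apply lintegral_congr
      intro x
      have hind : ∀ y : Euc n, (farReg n).indicator
            (fun z : Euc n × Euc n => ENNReal.ofReal (‖u z.1‖ ^ p * ‖z.1 - z.2‖ ^ (-r))) (x, y)
          = ({y : Euc n | 2 * ‖x‖ ≤ ‖y‖}).indicator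
            (fun y => ENNReal.ofReal (‖u x‖ ^ p * ‖x - y‖ ^ (-r))) y := by
        intro y
        by_cases h : 2 * ‖x‖ ≤ ‖y‖
        · rw [Set.indicator_of_mem (show (x, y) ∈ farReg n from h),
            Set.indicator_of_mem (show y ∈ {y : Euc n | 2 * ‖x‖ ≤ ‖y‖} from h)]
        · rw [Set.indicator_of_notMem (show (x, y) ∉ farReg n from h),
            Set.indicator_of_notMem (show y ∉ {y : Euc n | 2 * ‖x‖ ≤ ‖y‖} from h)]
      simp_rw [hind]
      rw [lintegral_indicator (measurableSet_le measurable_const measurable_norm)]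
      simp_rw [ofReal_npow_mul]
      rw [lintegral_const_mul' _ _ ENNReal.ofReal_ne_top]
    have hI₁ : (∫⁻ z in farReg n, ENNReal.ofReal (‖u z.1‖ ^ p * ‖z.1 - z.2‖ ^ (-r))
          ∂((volume : Measure (Euc n)).prod volume))
        ≤ ENNReal.ofReal (vC n * (r/(r-n))) * W t := by
      rw [hton]
      have hJ : ∀ᵐ x : Euc n, ENNReal.ofReal (‖u x‖ ^ p)
            * (∫⁻ y in {y : Euc n | 2 * ‖x‖ ≤ ‖y‖}, ENNReal.ofReal (‖x - y‖ ^ (-r)))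
          ≤ ENNReal.ofReal (‖u x‖ ^ p)
            * ENNReal.ofReal (vC n * (r/(r-n)) * ‖x‖ ^ ((n:ℝ) - r)) := by
        filter_upwards [compl_mem_ae_iff.2 hzero] with x hx
        exact mul_le_mul_right (sec_bound n hn0 hnr (hx : x ≠ 0)) _
      refine (lintegral_mono_ae hJ).trans (le_of_eq ?_)
      rw [hWdef]
      rw [← lintegral_const_mul' _ _ ENNReal.ofReal_ne_top]
      apply lintegral_congr
      intro x
      have hr0' : (0:ℝ) ≤ r := le_trans (Nat.cast_nonneg n) hnr.le
      have hcrn : (0:ℝ) ≤ vC n * (r/(r-n)) :=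
        mul_nonneg (vC_pos n).le (div_nonneg hr0' hrnpos.le)
      rw [ENNReal.ofReal_mul hcrn, ENNReal.ofReal_mul (by positivity : (0:ℝ) ≤ ‖u x‖ ^ p),
        show (n:ℝ) - r = -(p*t) by rw [hrdef]; ring]
      ring
    calc 2 * ENNReal.ofReal t * (∫⁻ z in farReg n,
          ENNReal.ofReal (‖u z.1‖ ^ p * ‖z.1 - z.2‖ ^ (-((n:ℝ) + p * t)))
          ∂((volume : Measure (Euc n)).prod volume))
        ≤ 2 * ENNReal.ofReal t * (ENNReal.ofReal (vC n * (r/(r-n))) * W t) :=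
          mul_le_mul_right hI₁ _
      _ = K t * W t := by
          rw [← mul_assoc, hKdef]
          congr 1
          rw [show (2:ℝ≥0∞) = ENNReal.ofReal 2 by norm_num,
            ← ENNReal.ofReal_mul (by norm_num : (0:ℝ) ≤ 2),
            ← ENNReal.ofReal_mul (by positivity : (0:ℝ) ≤ 2 * t)]
          congr 1
          rw [hrn, hrdef]
          field_simp
  -- bound for the second term
  have hbound2 : ∀ t ∈ Ioo (0:ℝ) σ,
      2 * ENNReal.ofReal t * (∫⁻ z in farReg n,
        ENNReal.ofReal (‖u z.2‖ ^ p * ‖z.1 - z.2‖ ^ (-((n:ℝ) + p * t)))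
        ∂((volume : Measure (Euc n)).prod volume)) ≤ L t * W t := by
    intro t ht
    have ht0 : (0:ℝ) < t := ht.1
    set r : ℝ := (n:ℝ) + p * t with hrdef
    have hnr : (n:ℝ) < r := by rw [hrdef]; nlinarith
    have g₂meas : Measurable fun z : Euc n × Euc n =>
        ENNReal.ofReal (‖u z.2‖ ^ p * ‖z.1 - z.2‖ ^ (-r)) := by fun_prop
    have hton : (∫⁻ z in farReg n, ENNReal.ofReal (‖u z.2‖ ^ p * ‖z.1 - z.2‖ ^ (-r))
          ∂((volume : Measure (Euc n)).prod volume))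
        = ∫⁻ y, ENNReal.ofReal (‖u y‖ ^ p)
            * ∫⁻ x in {x : Euc n | 2 * ‖x‖ ≤ ‖y‖}, ENNReal.ofReal (‖x - y‖ ^ (-r)) := by
      rw [← lintegral_indicator hfarm,
        lintegral_prod_symm _ (g₂meas.indicator hfarm).aemeasurable]
      apply lintegral_congr
      intro y
      have hind : ∀ x : Euc n, (farReg n).indicator
            (fun z : Euc n × Euc n => ENNReal.ofReal (‖u z.2‖ ^ p * ‖z.1 - z.2‖ ^ (-r))) (x, y)
          = ({x : Euc n | 2 * ‖x‖ ≤ ‖y‖}).indicator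
            (fun x => ENNReal.ofReal (‖u y‖ ^ p * ‖x - y‖ ^ (-r))) x := by
        intro x
        by_cases h : 2 * ‖x‖ ≤ ‖y‖
        · rw [Set.indicator_of_mem (show (x, y) ∈ farReg n from h),
            Set.indicator_of_mem (show x ∈ {x : Euc n | 2 * ‖x‖ ≤ ‖y‖} from h)]
        · rw [Set.indicator_of_notMem (show (x, y) ∉ farReg n from h),
            Set.indicator_of_notMem (show x ∉ {x : Euc n | 2 * ‖x‖ ≤ ‖y‖} from h)]
      simp_rw [hind]
      rw [lintegral_indicator (measurableSet_le (by fun_prop) measurable_const)]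
      simp_rw [ofReal_npow_mul]
      rw [lintegral_const_mul' _ _ ENNReal.ofReal_ne_top]
    have hI₂ : (∫⁻ z in farReg n, ENNReal.ofReal (‖u z.2‖ ^ p * ‖z.1 - z.2‖ ^ (-r))
          ∂((volume : Measure (Euc n)).prod volume))
        ≤ ENNReal.ofReal (vC n * (2:ℝ)^(p*t)) * W t := by
      rw [hton]
      have hJ : ∀ᵐ y : Euc n, ENNReal.ofReal (‖u y‖ ^ p)
            * (∫⁻ x in {x : Euc n | 2 * ‖x‖ ≤ ‖y‖}, ENNReal.ofReal (‖x - y‖ ^ (-r)))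
          ≤ ENNReal.ofReal (‖u y‖ ^ p)
            * ENNReal.ofReal ((vC n * (2:ℝ)^(p*t)) * ‖y‖ ^ (-(p*t))) := by
        filter_upwards [compl_mem_ae_iff.2 hzero] with y hy
        have hy0 : y ≠ 0 := hy
        have hy1 : 0 < ‖y‖ := norm_pos_iff.2 hy0
        refine mul_le_mul_right ((sec2_bound n hn0 hnr hy0).trans (le_of_eq ?_)) _
        congr 1
        rw [show (n:ℝ) - r = -(p*t) by rw [hrdef]; ring]
        rw [Real.div_rpow (norm_nonneg y) (by norm_num : (0:ℝ) ≤ 2),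
          Real.rpow_neg (by norm_num : (0:ℝ) ≤ 2), div_eq_mul_inv, inv_inv]
        ring
      refine (lintegral_mono_ae hJ).trans (le_of_eq ?_)
      rw [hWdef, ← lintegral_const_mul' _ _ ENNReal.ofReal_ne_top]
      apply lintegral_congr
      intro y
      have hc : (0:ℝ) ≤ vC n * (2:ℝ)^(p*t) :=
        mul_nonneg (vC_pos n).le (Real.rpow_nonneg (by norm_num) _)
      rw [ENNReal.ofReal_mul hc, ENNReal.ofReal_mul (by positivity : (0:ℝ) ≤ ‖u y‖ ^ p)]
      ring
    calc 2 * ENNReal.ofReal t * (∫⁻ z in farReg n,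
          ENNReal.ofReal (‖u z.2‖ ^ p * ‖z.1 - z.2‖ ^ (-((n:ℝ) + p * t)))
          ∂((volume : Measure (Euc n)).prod volume))
        ≤ 2 * ENNReal.ofReal t * (ENNReal.ofReal (vC n * (2:ℝ)^(p*t)) * W t) :=
          mul_le_mul_right hI₂ _
      _ = L t * W t := by
          rw [← mul_assoc, hLdef]
          congr 1
          rw [show (2:ℝ≥0∞) = ENNReal.ofReal 2 by norm_num,
            ← ENNReal.ofReal_mul (by norm_num : (0:ℝ) ≤ 2),
            ← ENNReal.ofReal_mul (by positivity : (0:ℝ) ≤ 2 * t)]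
  -- main eventual bound
  have hmain : ∀ᶠ t in l, 2 * ENNReal.ofReal t * magEnergyOn n p t A u (farReg n)
      ≤ ((K t * W t) ^ (1/p) + (L t * W t) ^ (1/p)) ^ p := by
    filter_upwards [Ioo_mem_nhdsGT_of_mem (left_mem_Ico.2 hσ0)] with t ht
    have hE := energy_le n hp ht.1 A hu hA
    calc 2 * ENNReal.ofReal t * magEnergyOn n p t A u (farReg n)
        ≤ 2 * ENNReal.ofReal t *
          ((∫⁻ z in farReg n, ENNReal.ofReal (‖u z.1‖ ^ p * ‖z.1 - z.2‖ ^ (-((n:ℝ) + p * t)))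
              ∂((volume : Measure (Euc n)).prod volume)) ^ (1/p) +
           (∫⁻ z in farReg n, ENNReal.ofReal (‖u z.2‖ ^ p * ‖z.1 - z.2‖ ^ (-((n:ℝ) + p * t)))
              ∂((volume : Measure (Euc n)).prod volume)) ^ (1/p)) ^ p :=
          mul_le_mul_right hE _
      _ = ((2 * ENNReal.ofReal t *
            (∫⁻ z in farReg n, ENNReal.ofReal (‖u z.1‖ ^ p * ‖z.1 - z.2‖ ^ (-((n:ℝ) + p * t)))
              ∂((volume : Measure (Euc n)).prod volume))) ^ (1/p) +
           (2 * ENNReal.ofReal t *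
            (∫⁻ z in farReg n, ENNReal.ofReal (‖u z.2‖ ^ p * ‖z.1 - z.2‖ ^ (-((n:ℝ) + p * t)))
              ∂((volume : Measure (Euc n)).prod volume))) ^ (1/p)) ^ p :=
          mul_mink p hp0 _ _ _
      _ ≤ ((K t * W t) ^ (1/p) + (L t * W t) ^ (1/p)) ^ p := by
          apply ENNReal.rpow_le_rpow ?_ hp0.le
          exact add_le_add (ENNReal.rpow_le_rpow (hbound1 t ht) (by positivity))
            (ENNReal.rpow_le_rpow (hbound2 t ht) (by positivity))
  -- limits of the two terms
  have hKlim : Tendsto K l (𝓝 (MSconst n p)) := by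
    have hc : Tendsto (fun t : ℝ => vC n * (2*n/p + 2*t)) (𝓝 0) (𝓝 (vC n * (2*n/p))) := by
      have hcont : Continuous fun t : ℝ => vC n * (2*n/p + 2*t) := by continuity
      have hc' := hcont.tendsto (0:ℝ)
      simpa using hc'
    have h2 := (ENNReal.continuous_ofReal.tendsto _).comp hc
    have hMS : ENNReal.ofReal (vC n * (2*n/p)) = MSconst n p := by
      unfold MSconst vC
      congr 1
      have hG : Real.Gamma ((n:ℝ)/2 + 1) = ((n:ℝ)/2) * Real.Gamma ((n:ℝ)/2) :=
        Real.Gamma_add_one (by positivity)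
      have hGpos : 0 < Real.Gamma ((n:ℝ)/2) := Real.Gamma_pos_of_pos (by positivity)
      have hsq : Real.sqrt Real.pi ^ n = Real.pi ^ ((n:ℝ)/2) := by
        rw [← Real.rpow_natCast (Real.sqrt Real.pi) n, Real.sqrt_eq_rpow,
          ← Real.rpow_mul Real.pi_pos.le]
        congr 1
        ring
      rw [hsq, hG]
      field_simp
      ring
    rw [← hMS]
    exact h2.mono_left nhdsWithin_le_nhds
  have hLlim : Tendsto L l (𝓝 0) := by
    have heq : ∀ t : ℝ, 2*t*(vC n * (2:ℝ)^(p*t))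
        = 2*t*(vC n * Real.exp (Real.log 2 * (p*t))) := by
      intro t
      rw [Real.rpow_def_of_pos (by norm_num : (0:ℝ) < 2)]
    have hc : Tendsto (fun t : ℝ => 2*t*(vC n * (2:ℝ)^(p*t))) (𝓝 0) (𝓝 0) := by
      simp_rw [heq]
      have hcont : Continuous fun t : ℝ =>
          2*t*(vC n * Real.exp (Real.log 2 * (p*t))) := by continuity
      have := hcont.tendsto (0:ℝ)
      simpa using this
    have h2 := (ENNReal.continuous_ofReal.tendsto _).comp hc
    rw [hLdef]
    simpa [Function.comp_def] using h2.mono_left nhdsWithin_le_nhds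
  have hKW : Tendsto (fun t => K t * W t) l (𝓝 (MSconst n p * lpPow n p u)) :=
    ENNReal.Tendsto.mul hKlim (Or.inr hLp.ne) hWlim (Or.inr ENNReal.ofReal_ne_top)
  have hLW : Tendsto (fun t => L t * W t) l (𝓝 0) := by
    have := ENNReal.Tendsto.mul hLlim (Or.inr hLp.ne) hWlim
      (Or.inr (by simp : (0:ℝ≥0∞) ≠ ⊤))
    simpa using this
  have hG : Tendsto (fun t => ((K t * W t) ^ (1/p) + (L t * W t) ^ (1/p)) ^ p) l
      (𝓝 (MSconst n p * lpPow n p u)) := by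
    have h1 : Tendsto (fun t => (K t * W t) ^ (1/p)) l
        (𝓝 ((MSconst n p * lpPow n p u) ^ (1/p))) :=
      (ENNReal.continuous_rpow_const.tendsto _).comp hKW
    have h2 : Tendsto (fun t => (L t * W t) ^ (1/p)) l (𝓝 ((0:ℝ≥0∞) ^ (1/p))) :=
      (ENNReal.continuous_rpow_const.tendsto _).comp hLW
    have h3 := (ENNReal.continuous_rpow_const (y := p)).tendsto _ |>.comp (h1.add h2)
    have h0 : ((0:ℝ≥0∞) ^ (1/p)) = 0 := ENNReal.zero_rpow_of_pos (by positivity)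
    rw [h0] at h3
    have h4 : (((MSconst n p * lpPow n p u) ^ (1/p) + 0) ^ p) = MSconst n p * lpPow n p u := by
      rw [add_zero, rpow_one_div_rpow p hp0]
    rw [h4] at h3
    exact h3
  calc limsup (fun s : ℝ => 2 * ENNReal.ofReal s * magEnergyOn n p s A u (farReg n)) l
      ≤ limsup (fun t => ((K t * W t) ^ (1/p) + (L t * W t) ^ (1/p)) ^ p) l :=
        limsup_le_limsup hmain
    _ = MSconst n p * lpPow n p u := hG.limsup_eq
end
end
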